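/- arXiv:2503.22991 — 6 statements merged into one kernel-verified Lean document; each statement's English description precedes it below -/
import Mathlib

section
/- Let ℓ be an odd prime, N ≥ 1, ζ = ζ_{ℓ^N} a primitive ℓ^N-th root of unity, K = Q(ζ), and let a, b be integers with ℓ ∤ (a + b). For any prime ideal 𝔭 of O_K not dividing ℓ, the Jacobi sum J(χ^a, χ^b) of the ℓ^N-th power residue characters χ = (·/𝔭)_{ℓ^N} satisfies J(χ^a, χ^b) ≡ -1 (mod (1 - ζ)^2). -/
set_option synthInstance.maxHeartbeats 800000
set_option maxHeartbeats 4000000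
open scoped NumberField BigOperators

private lemma aux_bin {R : Type*} [CommRing R] (δ : R) (hδ2 : δ * δ = 0) :
    ∀ A : ℕ, (1 + δ) ^ A = 1 + (A : R) * δ := by
  intro A
  induction A with
  | zero => simp
  | succ n ih =>
    rw [pow_succ, ih]
    have : (1 + (n : R) * δ) * (1 + δ)
        = 1 + ((n : R) + 1) * δ + (n : R) * (δ * δ) := by ring
    rw [this, hδ2, mul_zero, add_zero]
    push_cast; ring

theorem stmt_3 (ℓ N : ℕ) (hℓ : ℓ.Prime) (hodd : Odd ℓ) (hN : 1 ≤ N)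
    {K : Type*} [Field K] [NumberField K]
    (ζ : 𝓞 K) (hζ : IsPrimitiveRoot ζ (ℓ ^ N))
    (hK : Algebra.adjoin ℚ {(algebraMap (𝓞 K) K ζ)} = ⊤)
    (𝔭 : Ideal (𝓞 K)) [𝔭.IsPrime] (h𝔭 : (ℓ : 𝓞 K) ∉ 𝔭)
    [Fintype (𝓞 K ⧸ 𝔭)] [DecidableEq (𝓞 K ⧸ 𝔭)]
    (a b : ℤ) (hab : ¬ (ℓ : ℤ) ∣ (a + b))
    (χ : (𝓞 K ⧸ 𝔭) → 𝓞 K)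
    (hχ0 : χ 0 = 0)
    (hχroot : ∀ x : 𝓞 K ⧸ 𝔭, x ≠ 0 → χ x ^ ℓ ^ N = 1)
    (hχcong : ∀ x : 𝓞 K ⧸ 𝔭,
      Ideal.Quotient.mk 𝔭 (χ x) = x ^ ((Fintype.card (𝓞 K ⧸ 𝔭) - 1) / ℓ ^ N)) :
    (1 - ζ) ^ 2 ∣
      (∑ x ∈ Finset.univ \ {0, 1},
          χ x ^ (a % (ℓ ^ N : ℤ)).toNat * χ ((1 : 𝓞 K ⧸ 𝔭) - x) ^ (b % (ℓ ^ N : ℤ)).toNat) + 1 := by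
  classical
  set m := ℓ ^ N with hm
  have hℓ3 : 3 ≤ ℓ := by
    rcases hℓ.two_le.lt_or_eq with h | h
    · omega
    · exfalso; rw [← h] at hodd; exact (by decide : ¬ Odd 2) hodd
  have hm3 : 3 ≤ m := le_trans hℓ3 (Nat.le_self_pow (by omega) ℓ)
  haveI : NeZero m := ⟨by omega⟩
  obtain ⟨m', hm'⟩ : ∃ m', m = m' + 1 := ⟨m - 1, by omega⟩
  have hζ' : IsPrimitiveRoot ζ (m' + 1) := hm' ▸ hζ
  have hprod : ∏ k ∈ Finset.range m', (1 - ζ ^ (k + 1)) = (m : 𝓞 K) := by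
    rw [hζ'.prod_one_sub_pow_eq_order, hm']; push_cast; ring
  have hmem_ne : (m : 𝓞 K) ∉ 𝔭 := by
    intro h
    apply h𝔭
    refine ‹𝔭.IsPrime›.mem_of_pow_mem N ?_
    have : ((m : ℕ) : 𝓞 K) = (ℓ : 𝓞 K) ^ N := by rw [hm]; push_cast; ring
    rwa [this] at h
  -- kernel fact
  have hker : ∀ k, k < m → Ideal.Quotient.mk 𝔭 (ζ ^ k) = 1 → k = 0 := by
    intro k hk h1
    by_contra hk0
    have hmem : 1 - ζ ^ k ∈ 𝔭 := by
      have h2 : Ideal.Quotient.mk 𝔭 (1 - ζ ^ k) = 0 := by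
        rw [map_sub, h1, map_one, sub_self]
      exact (Ideal.Quotient.eq_zero_iff_mem).mp h2
    apply hmem_ne
    have hk1 : k - 1 + 1 = k := by omega
    have hdvd : (1 - ζ ^ k) ∣ ∏ j ∈ Finset.range m', (1 - ζ ^ (j + 1)) := by
      have := Finset.dvd_prod_of_mem (fun j => 1 - ζ ^ (j + 1))
        (Finset.mem_range.mpr (by omega : k - 1 < m'))
      simpa only [hk1] using this
    rw [hprod] at hdvd
    obtain ⟨c, hc⟩ := hdvd
    rw [hc]
    exact Ideal.mul_mem_right _ _ hmem
  -- injectivity of reduction on roots of unity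
  have hEq : ∀ u v : 𝓞 K, u ^ m = 1 → v ^ m = 1 →
      Ideal.Quotient.mk 𝔭 u = Ideal.Quotient.mk 𝔭 v → u = v := by
    intro u v hu hv huv
    have hw : (u * v ^ m') ^ m = 1 := by
      rw [mul_pow, hu, one_mul, ← pow_mul, mul_comm m' m, pow_mul, hv, one_pow]
    obtain ⟨k, hk, hkw⟩ := hζ.eq_pow_of_pow_eq_one hw
    have hmkw : Ideal.Quotient.mk 𝔭 (ζ ^ k) = 1 := by
      rw [hkw, map_mul, huv, map_pow, ← pow_succ']
      rw [show m' + 1 = m from hm'.symm, ← map_pow, hv, map_one]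
    have k0 := hker k hk hmkw
    rw [k0, pow_zero] at hkw
    have hv1 : v ^ m' * v = 1 := by rw [← pow_succ, ← hm', hv]
    calc u = u * (v ^ m' * v) := by rw [hv1, mul_one]
      _ = (u * v ^ m') * v := by ring
      _ = v := by rw [← hkw, one_mul]
  haveI hmax : 𝔭.IsMaximal := by
    refine Ideal.IsPrime.isMaximal inferInstance ?_
    intro hbot
    have hinj : Function.Injective (Ideal.Quotient.mk 𝔭) := by
      intro x y h
      have := Ideal.Quotient.eq.mp h
      rwa [hbot, Ideal.mem_bot, sub_eq_zero] at this
    have : Finite (𝓞 K) := Finite.of_injective _ hinj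
    exact absurd this (by exact fun _ => (not_finite (𝓞 K)))
  have hq2 : 2 ≤ Fintype.card (𝓞 K ⧸ 𝔭) := by
    letI := Ideal.Quotient.field 𝔭
    exact Fintype.one_lt_card
  have hχ1 : χ 1 = 1 := by
    refine hEq _ _ (hχroot 1 one_ne_zero) (one_pow m) ?_
    rw [hχcong]; simp
  have hχmul : ∀ x y, x ≠ 0 → y ≠ 0 → χ (x * y) = χ x * χ y := by
    intro x y hx hy
    refine hEq _ _ (hχroot _ (mul_ne_zero hx hy))
      (by rw [mul_pow, hχroot x hx, hχroot y hy, one_mul]) ?_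
    rw [map_mul, hχcong, hχcong, hχcong, mul_pow]
  -- field structure on the quotient
  -- the reduction of ζ has order m
  have hζbar : orderOf (Ideal.Quotient.mk 𝔭 ζ) = m := by
    have h1 : (Ideal.Quotient.mk 𝔭 ζ) ^ m = 1 := by rw [← map_pow, hζ.pow_eq_one, map_one]
    have hdm : orderOf (Ideal.Quotient.mk 𝔭 ζ) ∣ m := orderOf_dvd_of_pow_eq_one h1
    by_contra hne
    have hlt : orderOf (Ideal.Quotient.mk 𝔭 ζ) < m :=
      lt_of_le_of_ne (Nat.le_of_dvd (by omega) hdm) hne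
    have h0 := hker _ hlt (by rw [map_pow]; exact pow_orderOf_eq_one _)
    rw [h0] at hdm
    exact absurd (zero_dvd_iff.mp hdm) (by omega)
  have hqdvd : m ∣ Fintype.card (𝓞 K ⧸ 𝔭) - 1 := by
    have hu : IsUnit (Ideal.Quotient.mk 𝔭 ζ) := by
      refine IsUnit.of_mul_eq_one ((Ideal.Quotient.mk 𝔭 ζ) ^ m') ?_
      rw [← pow_succ', show m' + 1 = m from hm'.symm, ← map_pow, hζ.pow_eq_one, map_one]
    have hcard : orderOf hu.unit ∣ Fintype.card (𝓞 K ⧸ 𝔭) - 1 := by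
      letI := Ideal.Quotient.field 𝔭
      have := orderOf_dvd_card (x := hu.unit)
      rwa [Fintype.card_units] at this
    have h2 : orderOf (Ideal.Quotient.mk 𝔭 ζ) = orderOf hu.unit := by
      rw [← orderOf_units, hu.unit_spec]
    rw [← hζbar, h2]
    exact hcard
  -- nontriviality of χ
  obtain ⟨g, hg⟩ : ∃ g : (𝓞 K ⧸ 𝔭)ˣ, ∀ x, x ∈ Subgroup.zpowers g := by
    letI := Ideal.Quotient.field 𝔭
    exact IsCyclic.exists_generator
  have hgord : orderOf g = Fintype.card (𝓞 K ⧸ 𝔭) - 1 := by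
    letI := Ideal.Quotient.field 𝔭
    rw [orderOf_eq_card_of_forall_mem_zpowers hg, Nat.card_eq_fintype_card, Fintype.card_units]
  have he1 : 1 ≤ (Fintype.card (𝓞 K ⧸ 𝔭) - 1) / m :=
    Nat.div_pos (Nat.le_of_dvd (by omega) hqdvd) (by omega)
  have hem : (Fintype.card (𝓞 K ⧸ 𝔭) - 1) / m * m = Fintype.card (𝓞 K ⧸ 𝔭) - 1 :=
    Nat.div_mul_cancel hqdvd
  have hy : ((g : 𝓞 K ⧸ 𝔭)) ^ ((Fintype.card (𝓞 K ⧸ 𝔭) - 1) / m) ≠ 1 := by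
    intro h
    have hg1 : g ^ ((Fintype.card (𝓞 K ⧸ 𝔭) - 1) / m) = 1 := by
      ext; push_cast; exact h
    have hdvd := orderOf_dvd_of_pow_eq_one hg1
    rw [hgord] at hdvd
    have hle := Nat.le_of_dvd (by omega) hdvd
    nlinarith [hem, hm3, he1]
  have hg0 : (g : 𝓞 K ⧸ 𝔭) ≠ 0 := Units.ne_zero g
  have hχg : χ (g : 𝓞 K ⧸ 𝔭) ≠ 1 := by
    intro h
    apply hy
    have := hχcong (g : 𝓞 K ⧸ 𝔭)
    rw [h, map_one] at this
    exact this.symm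
  -- sum of χ over nonzero elements vanishes
  have hsum0 : ∑ x ∈ Finset.univ \ ({0} : Finset (𝓞 K ⧸ 𝔭)), χ x = 0 := by
    have hbij : ∑ x ∈ Finset.univ \ ({0} : Finset (𝓞 K ⧸ 𝔭)), χ ((g : 𝓞 K ⧸ 𝔭) * x)
        = ∑ x ∈ Finset.univ \ ({0} : Finset (𝓞 K ⧸ 𝔭)), χ x := by
      letI := Ideal.Quotient.field 𝔭
      refine Finset.sum_equiv (Equiv.mulLeft₀ (g : 𝓞 K ⧸ 𝔭) hg0) ?_ ?_
      · intro i; simp [Finset.mem_sdiff, mul_eq_zero, hg0]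
      · intro i _; rfl
    have hexp : ∑ x ∈ Finset.univ \ ({0} : Finset (𝓞 K ⧸ 𝔭)), χ ((g : 𝓞 K ⧸ 𝔭) * x)
        = χ (g : 𝓞 K ⧸ 𝔭) * ∑ x ∈ Finset.univ \ ({0} : Finset (𝓞 K ⧸ 𝔭)), χ x := by
      rw [Finset.mul_sum]
      refine Finset.sum_congr rfl ?_
      intro x hx
      rw [hχmul _ _ hg0 (by simpa [Finset.mem_sdiff] using hx)]
    rw [hexp] at hbij
    have : (χ (g : 𝓞 K ⧸ 𝔭) - 1) * ∑ x ∈ Finset.univ \ ({0} : Finset (𝓞 K ⧸ 𝔭)), χ x = 0 := by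
      rw [sub_mul, one_mul, hbij, sub_self]
    rcases mul_eq_zero.mp this with h | h
    · exact absurd (sub_eq_zero.mp h) hχg
    · exact h
  -- divisibility facts
  have hdvd2 : (1 - ζ) ^ 2 ∣ (m : 𝓞 K) := by
    obtain ⟨z, _, hzz⟩ := hζ.self_sub_one_pow_dvd_order (k := 2) (by omega : 2 < m)
    exact ⟨z, by rw [hzz]; ring⟩
  have hdvdq : (1 - ζ) ^ 2 ∣ ((Fintype.card (𝓞 K ⧸ 𝔭) - 1 : ℕ) : 𝓞 K) :=
    dvd_trans hdvd2 (Nat.cast_dvd_cast hqdvd)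
  have hδ : ∀ x : 𝓞 K ⧸ 𝔭, x ≠ 0 → (1 - ζ) ∣ (χ x - 1) := by
    intro x hx
    obtain ⟨i, _, hi⟩ := hζ.eq_pow_of_pow_eq_one (hχroot x hx)
    rw [← hi, show (1 : 𝓞 K) - ζ = -(ζ - 1) by ring, neg_dvd]
    simpa using sub_dvd_pow_sub_pow ζ 1 i
  -- work modulo (1-ζ)^2
  set J : Ideal (𝓞 K) := Ideal.span {(1 - ζ) ^ 2} with hJ
  set π := Ideal.Quotient.mk J with hπ
  set S : Finset (𝓞 K ⧸ 𝔭) := Finset.univ \ {0, 1} with hSdef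
  have hmemS : ∀ x ∈ S, x ≠ 0 ∧ x ≠ 1 := by
    intro x hx
    simpa [hSdef, Finset.mem_sdiff] using hx
  have hzero : ∀ y : 𝓞 K, (1 - ζ) ^ 2 ∣ y → π y = 0 := by
    intro y hy
    rw [hπ, Ideal.Quotient.eq_zero_iff_mem, hJ, Ideal.mem_span_singleton]
    exact hy
  have hterm : ∀ x ∈ S, π (χ x ^ (a % ((ℓ : ℤ) ^ N)).toNat * χ (1 - x) ^ (b % ((ℓ : ℤ) ^ N)).toNat)
      = 1 + ((a % ((ℓ : ℤ) ^ N)).toNat : 𝓞 K ⧸ J) * π (χ x - 1) + ((b % ((ℓ : ℤ) ^ N)).toNat : 𝓞 K ⧸ J) * π (χ (1 - x) - 1) := by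
    intro x hx
    obtain ⟨hx0, hx1⟩ := hmemS x hx
    have h1x : (1 : 𝓞 K ⧸ 𝔭) - x ≠ 0 := sub_ne_zero.mpr (Ne.symm hx1)
    have hdu : π (χ x - 1) * π (χ x - 1) = 0 := by
      rw [← map_mul]
      exact hzero _ (by simpa [sq] using mul_dvd_mul (hδ x hx0) (hδ x hx0))
    have hdv : π (χ (1 - x) - 1) * π (χ (1 - x) - 1) = 0 := by
      rw [← map_mul]
      exact hzero _ (by simpa [sq] using mul_dvd_mul (hδ _ h1x) (hδ _ h1x))
    have hcross : π (χ x - 1) * π (χ (1 - x) - 1) = 0 := by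
      rw [← map_mul]
      exact hzero _ (by simpa [sq] using mul_dvd_mul (hδ x hx0) (hδ _ h1x))
    have hu : π (χ x) = 1 + π (χ x - 1) := by
      rw [← map_one (f := π), ← map_add, add_sub_cancel]
    have hv : π (χ (1 - x)) = 1 + π (χ (1 - x) - 1) := by
      rw [← map_one (f := π), ← map_add, add_sub_cancel]
    rw [map_mul, map_pow, map_pow, hu, hv, aux_bin _ hdu _, aux_bin _ hdv _]
    have expand : (1 + ((a % ((ℓ : ℤ) ^ N)).toNat : 𝓞 K ⧸ J) * π (χ x - 1)) * (1 + ((b % ((ℓ : ℤ) ^ N)).toNat : 𝓞 K ⧸ J) * π (χ (1 - x) - 1))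
        = 1 + ((a % ((ℓ : ℤ) ^ N)).toNat : 𝓞 K ⧸ J) * π (χ x - 1) + ((b % ((ℓ : ℤ) ^ N)).toNat : 𝓞 K ⧸ J) * π (χ (1 - x) - 1)
          + (((a % ((ℓ : ℤ) ^ N)).toNat : 𝓞 K ⧸ J) * ((b % ((ℓ : ℤ) ^ N)).toNat : 𝓞 K ⧸ J)) * (π (χ x - 1) * π (χ (1 - x) - 1)) := by ring
    rw [expand, hcross, mul_zero, add_zero]
  -- sums of χ over S
  have hS : S = (Finset.univ \ ({0} : Finset (𝓞 K ⧸ 𝔭))).erase 1 := by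
    ext x
    simp only [hSdef, Finset.mem_sdiff, Finset.mem_erase, Finset.mem_univ, true_and,
      Finset.mem_insert, Finset.mem_singleton]
    tauto
  have hsumS : ∑ x ∈ S, χ x = -1 := by
    have h1mem : (1 : 𝓞 K ⧸ 𝔭) ∈ Finset.univ \ ({0} : Finset (𝓞 K ⧸ 𝔭)) := by simp
    have h := Finset.add_sum_erase _ χ h1mem
    rw [hsum0, hχ1] at h
    rw [hS]
    linear_combination h
  have hsumS' : ∑ x ∈ S, χ (1 - x) = -1 := by
    rw [← hsumS]
    refine Finset.sum_equiv (Equiv.subLeft (1 : 𝓞 K ⧸ 𝔭)) ?_ ?_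
    · intro i
      simp only [hSdef, Finset.mem_sdiff, Finset.mem_univ, true_and, Finset.mem_insert,
        Finset.mem_singleton, Equiv.subLeft_apply, not_or, sub_eq_zero]
      rw [sub_eq_self]
      constructor
      · rintro ⟨h0, h1⟩
        exact ⟨fun h => h1 h.symm, h0⟩
      · rintro ⟨h0, h1⟩
        exact ⟨h1, fun h => h0 h.symm⟩
    · intro i _; rfl
  -- cardinality
  have hcardS : S.card = Fintype.card (𝓞 K ⧸ 𝔭) - 2 := by
    rw [hSdef, Finset.card_sdiff_of_subset (Finset.subset_univ _), Finset.card_univ]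
    congr 1
    rw [Finset.card_insert_of_notMem (by simp), Finset.card_singleton]
  have hc1 : (1 - ζ) ^ 2 ∣ ((S.card : 𝓞 K) + 1) := by
    have : (S.card : 𝓞 K) + 1 = ((Fintype.card (𝓞 K ⧸ 𝔭) - 1 : ℕ) : 𝓞 K) := by
      rw [hcardS]
      have : (Fintype.card (𝓞 K ⧸ 𝔭) - 2) + 1 = Fintype.card (𝓞 K ⧸ 𝔭) - 1 := by omega
      rw [← this]; push_cast; ring
    rw [this]; exact hdvdq
  -- final computation
  suffices h : π ((∑ x ∈ S, χ x ^ (a % ((ℓ : ℤ) ^ N)).toNat * χ (1 - x) ^ (b % ((ℓ : ℤ) ^ N)).toNat) + 1) = 0 by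
    rwa [hπ, Ideal.Quotient.eq_zero_iff_mem, hJ, Ideal.mem_span_singleton] at h
  have hsum1 : π (∑ x ∈ S, (χ x - 1)) = (-1 : 𝓞 K ⧸ J) - (S.card : 𝓞 K ⧸ J) := by
    rw [Finset.sum_sub_distrib, Finset.sum_const, nsmul_eq_mul, mul_one, hsumS,
      map_sub, map_neg, map_one, map_natCast]
  have hsum2 : π (∑ x ∈ S, (χ (1 - x) - 1)) = (-1 : 𝓞 K ⧸ J) - (S.card : 𝓞 K ⧸ J) := by
    rw [Finset.sum_sub_distrib, Finset.sum_const, nsmul_eq_mul, mul_one, hsumS',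
      map_sub, map_neg, map_one, map_natCast]
  have hcard0 : (S.card : 𝓞 K ⧸ J) + 1 = 0 := by
    have := hzero _ hc1
    rwa [map_add, map_natCast, map_one] at this
  rw [map_add, map_one, map_sum]
  rw [Finset.sum_congr rfl hterm]
  rw [Finset.sum_add_distrib, Finset.sum_add_distrib, ← Finset.mul_sum, ← Finset.mul_sum,
    ← map_sum, ← map_sum, hsum1, hsum2, Finset.sum_const, nsmul_eq_mul, mul_one]
  have hz : (-1 : 𝓞 K ⧸ J) - (S.card : 𝓞 K ⧸ J) = 0 := by
    have : (-1 : 𝓞 K ⧸ J) - (S.card : 𝓞 K ⧸ J) = -((S.card : 𝓞 K ⧸ J) + 1) := by ring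
    rw [this, hcard0, neg_zero]
  rw [hz, mul_zero, mul_zero, add_zero, add_zero]
  exact hcard0
end

section
/- Let ℓ be an odd prime, N ≥ 1, and q a prime power with q ≡ -1 (mod ℓ). If χ is a nontrivial character of F_q^× of order dividing ℓ^N and a, b are integers with ℓ ∤ ab(a+b), then the Jacobi sum J(χ^a, χ^b) is of the form u·q' where q'^2 = q and u is a root of unity (in particular an algebraic integer all of whose archimedean absolute values equal 1). -/
open Finset in
/-- If `ψ^(q'+1) = 1` where `x ↦ x^q'` is a ring endomorphism of `F`,
then `J(ψ⁻¹, φ⁻¹) = J(ψ, φ)` for `φ` also satisfying this. -/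
lemma aux_jacobiSum_inv_inv {F : Type*} [Field F] [Fintype F] (q' : ℕ) (hq0 : q' ≠ 0)
    (frob : F →+* F) (hfrob : ∀ x : F, frob x = x ^ q')
    (ψ φ : MulChar F ℂ) (hψ : ψ ^ (q' + 1) = 1) (hφ : φ ^ (q' + 1) = 1) :
    jacobiSum ψ⁻¹ φ⁻¹ = jacobiSum ψ φ := by
  have key : ∀ (ρ : MulChar F ℂ), ρ ^ (q' + 1) = 1 → ∀ x : F, ρ⁻¹ x = ρ (x ^ q') := by
    intro ρ hρ x
    rcases eq_or_ne x 0 with rfl | hx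
    · rw [zero_pow hq0, MulChar.inv_apply', inv_zero]
    · have hu : IsUnit x := isUnit_iff_ne_zero.mpr hx
      have h1 : ρ x ^ (q' + 1) = 1 := by
        rw [← MulChar.pow_apply' ρ (Nat.succ_ne_zero q') x, hρ, MulChar.one_apply hu]
      have hρx : ρ x ≠ 0 := by
        intro h
        rw [h, zero_pow (Nat.succ_ne_zero q')] at h1
        exact zero_ne_one h1
      rw [MulChar.inv_apply_eq_inv', map_pow]
      field_simp
      rw [← pow_succ']
      exact h1.symm
  have hbij : Function.Bijective frob :=
    (Fintype.bijective_iff_injective_and_card frob).mpr ⟨frob.injective, rfl⟩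
  calc jacobiSum ψ⁻¹ φ⁻¹ = ∑ x : F, ψ (x ^ q') * φ ((1 - x) ^ q') := by
        unfold jacobiSum
        exact Finset.sum_congr rfl fun x _ => by rw [key ψ hψ, key φ hφ]
    _ = ∑ x : F, ψ (frob x) * φ (1 - frob x) := by
        refine Finset.sum_congr rfl fun x _ => ?_
        rw [hfrob, ← hfrob, ← hfrob, map_sub, map_one]
    _ = jacobiSum ψ φ := Fintype.sum_bijective frob hbij _ _ fun x => rfl

theorem stmt_4 {F : Type*} [Field F] [Fintype F] [DecidableEq F]
    (ℓ N : ℕ) (hℓ : ℓ.Prime) (hodd : Odd ℓ) (hN : 1 ≤ N)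
    (q' : ℕ) (hcard : Fintype.card F = q' ^ 2) (hq' : (q' : ZMod ℓ) = -1)
    (χ : MulChar F ℂ) (hχ : χ ≠ 1) (hχord : χ ^ ℓ ^ N = 1)
    (a b : ℤ) (hab : ¬ (ℓ : ℤ) ∣ a * b * (a + b)) :
    ∃ u : ℂ, (∃ n : ℕ, 0 < n ∧ u ^ n = 1) ∧
      jacobiSum (χ ^ a) (χ ^ b) = u * (q' : ℂ) := by
  -- basic facts about q'
  have hq2 : 2 ≤ q' := by
    have h1 : 1 < Fintype.card F := Fintype.one_lt_card
    rw [hcard] at h1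
    nlinarith
  have hq0 : q' ≠ 0 := by omega
  -- order of χ is a power of ℓ dividing q' + 1
  obtain ⟨k, hkN, hordk⟩ := (Nat.dvd_prime_pow hℓ).mp (orderOf_dvd_of_pow_eq_one hχord)
  have hk0 : k ≠ 0 := by
    rintro rfl
    exact hχ (orderOf_eq_one_iff.mp (by rwa [pow_zero] at hordk))
  have hord_dvd : orderOf χ ∣ q' ^ 2 - 1 := by
    have := MulChar.pow_card_eq_one χ
    rw [Fintype.card_units, hcard] at this
    exact orderOf_dvd_of_pow_eq_one this
  have hndvd : ¬ ℓ ∣ q' - 1 := by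
    intro h
    have : ((q' - 1 : ℕ) : ZMod ℓ) = 0 := (ZMod.natCast_eq_zero_iff _ _).mpr h
    rw [Nat.cast_sub (by omega), hq', Nat.cast_one] at this
    have h2 : ((2 : ℕ) : ZMod ℓ) = 0 := by push_cast; linear_combination -this
    have := (ZMod.natCast_eq_zero_iff 2 ℓ).mp h2
    have := (Nat.prime_dvd_prime_iff_eq hℓ Nat.prime_two).mp this
    rw [this] at hodd
    exact (Nat.not_odd_iff_even.mpr even_two) hodd
  have hcop : Nat.Coprime (orderOf χ) (q' - 1) := by
    rw [hordk]
    exact Nat.Coprime.pow_left _ ((Nat.Prime.coprime_iff_not_dvd hℓ).mpr hndvd)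
  have hord_q1 : orderOf χ ∣ q' + 1 := by
    have hfac : q' ^ 2 - 1 = (q' - 1) * (q' + 1) := by
      have := Nat.sq_sub_sq q' 1
      simpa [mul_comm] using this
    rw [hfac] at hord_dvd
    exact (Nat.Coprime.dvd_of_dvd_mul_left hcop) hord_dvd
  have hχq1 : χ ^ (q' + 1) = 1 := orderOf_dvd_iff_pow_eq_one.mp hord_q1
  -- nontriviality of χ^a, χ^b, χ^(a+b)
  have hpow_ne : ∀ c : ℤ, ¬ (ℓ : ℤ) ∣ c → χ ^ c ≠ 1 := by
    intro c hc h1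
    have : (orderOf χ : ℤ) ∣ c := orderOf_dvd_iff_zpow_eq_one.mpr h1
    rw [hordk] at this
    exact hc (dvd_trans (by exact_mod_cast dvd_pow_self (ℓ : ℤ) hk0) this)
  have hdvd_a : ¬ (ℓ : ℤ) ∣ a := fun h => hab (h.mul_right _ |>.mul_right _)
  have hdvd_b : ¬ (ℓ : ℤ) ∣ b := fun h => hab ((h.mul_left a).mul_right _)
  have hdvd_ab : ¬ (ℓ : ℤ) ∣ (a + b) := fun h => hab (h.mul_left _)
  have ha1 : χ ^ a ≠ 1 := hpow_ne a hdvd_a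
  have hb1 : χ ^ b ≠ 1 := hpow_ne b hdvd_b
  have hab1 : χ ^ a * χ ^ b ≠ 1 := by rw [← zpow_add]; exact hpow_ne _ hdvd_ab
  -- the Frobenius x ↦ x^q'
  obtain ⟨n, hp, hc⟩ := FiniteField.card F (ringChar F)
  have hq'dvd : q' ∣ ringChar F ^ (n : ℕ) := by
    rw [← hc, hcard]; exact dvd_pow_self q' two_ne_zero
  obtain ⟨m, _, hm⟩ := (Nat.dvd_prime_pow hp).mp hq'dvd
  haveI : ExpChar F (ringChar F) := ExpChar.prime hp
  set frob : F →+* F := iterateFrobenius F (ringChar F) m with hfrobdef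
  have hfrob : ∀ x : F, frob x = x ^ q' := fun x => by
    rw [hfrobdef, iterateFrobenius_def, hm]
  -- zpow powers of χ also satisfy ρ^(q'+1) = 1
  have hzpow : ∀ c : ℤ, (χ ^ c) ^ (q' + 1) = 1 := fun c => by
    rw [← zpow_natCast, ← zpow_mul, mul_comm, zpow_mul, zpow_natCast, hχq1, one_zpow]
  -- J(χ^a, χ^b)^2 = q'^2
  have hchar : ringChar ℂ ≠ ringChar F := by
    rw [ringChar.eq_zero]
    exact fun h => hp.ne_zero h.symm
  have hmul := jacobiSum_mul_jacobiSum_inv hchar ha1 hb1 hab1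
  rw [aux_jacobiSum_inv_inv q' hq0 frob hfrob _ _ (hzpow a) (hzpow b), ← sq, hcard] at hmul
  -- conclude
  have hq'C : (q' : ℂ) ≠ 0 := Nat.cast_ne_zero.mpr hq0
  refine ⟨jacobiSum (χ ^ a) (χ ^ b) / q', ⟨2, two_pos, ?_⟩, by field_simp⟩
  rw [div_pow, hmul]
  push_cast
  field_simp
end

section
/- Let ℓ be an odd prime and N ≥ 1. For every integer s ≥ 0, the alternating sum ∑_{0 ≤ i ≤ ℓN - N} (-1)^i · C(ℓ^s(ℓN - N + 1) - 1, i·ℓ^s) is divisible by ℓ^{ℓN}, where C(n,k) denotes the binomial coefficient. -/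
open scoped BigOperators

open Finset Polynomial

private def Fm (m n : ℕ) : ℤ := ∑ i ∈ Finset.range (n + 1), (-1) ^ i * ((n.choose (i * m)) : ℤ)

private lemma sum_ext (m n : ℕ) (hm : 1 ≤ m) {B C : ℕ} (hBC : B ≤ C) (hB : n < (B + 1) * m) :
    ∑ i ∈ Finset.range (C + 1), (-1 : ℤ) ^ i * ((n.choose (i * m)) : ℤ) =
      ∑ i ∈ Finset.range (B + 1), (-1 : ℤ) ^ i * ((n.choose (i * m)) : ℤ) := by
  refine (Finset.sum_subset (Finset.range_subset_range.2 (by omega)) ?_).symm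
  intro i hi hni
  simp only [Finset.mem_range] at hi hni
  have h1 : (B + 1) * m ≤ i * m := Nat.mul_le_mul_right m (by omega)
  rw [Nat.choose_eq_zero_of_lt (by omega)]
  simp

private lemma Fm_eq (m n : ℕ) (hm : 1 ≤ m) {B : ℕ} (hB : n < (B + 1) * m) :
    Fm m n = ∑ i ∈ Finset.range (B + 1), (-1 : ℤ) ^ i * ((n.choose (i * m)) : ℤ) := by
  have h1 := sum_ext m n hm (le_max_right B n) (by nlinarith : n < (n + 1) * m)
  have h2 := sum_ext m n hm (le_max_left B n) hB
  rw [Fm, ← h1, h2]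

private lemma diff_identity (m K x : ℕ) (h : m ≤ K) :
    ∑ j ∈ Finset.range (m + 1), (-1 : ℤ) ^ j * (m.choose j : ℤ) * ((x + (m - j)).choose K : ℤ) =
      (x.choose (K - m) : ℤ) := by
  have hinner : ∑ j ∈ Finset.range (m + 1),
      Polynomial.C ((-1 : ℤ) ^ j * (m.choose j : ℤ)) * (Polynomial.X + 1) ^ (m - j) =
      (Polynomial.X : ℤ[X]) ^ m := by
    have hs := sub_pow (Polynomial.X + 1 : ℤ[X]) 1 m
    simp only [add_sub_cancel_right, one_pow, mul_one] at hs
    have hrefl := (Finset.sum_range_reflect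
      (fun i => ((-1 : ℤ[X]) ^ (i + m) * (Polynomial.X + 1) ^ i * (m.choose i : ℤ[X]))) (m + 1))
    rw [hs, ← hrefl]
    refine Finset.sum_congr rfl fun j hj => ?_
    rw [Finset.mem_range] at hj
    have hjm : j ≤ m := by omega
    have h1 : m + 1 - 1 - j = m - j := by omega
    rw [h1, Nat.choose_symm hjm]
    have hsign : ((-1 : ℤ[X])) ^ (m - j + m) = (-1) ^ j := by
      rw [neg_one_pow_eq_pow_mod_two, neg_one_pow_eq_pow_mod_two (n := j)]
      congr 1
      omega
    rw [hsign]
    simp only [map_mul, map_pow, map_neg, map_one, Polynomial.C_eq_natCast]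
    ring
  have hpoly : ∑ j ∈ Finset.range (m + 1),
      Polynomial.C ((-1 : ℤ) ^ j * (m.choose j : ℤ)) * (Polynomial.X + 1) ^ (x + (m - j)) =
      Polynomial.X ^ m * (Polynomial.X + 1) ^ x := by
    calc ∑ j ∈ Finset.range (m + 1),
        Polynomial.C ((-1 : ℤ) ^ j * (m.choose j : ℤ)) * (Polynomial.X + 1) ^ (x + (m - j))
        = (∑ j ∈ Finset.range (m + 1),
            Polynomial.C ((-1 : ℤ) ^ j * (m.choose j : ℤ)) * (Polynomial.X + 1) ^ (m - j)) *
            (Polynomial.X + 1) ^ x := by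
          rw [Finset.sum_mul]
          refine Finset.sum_congr rfl fun j hj => ?_
          rw [pow_add]
          ring
      _ = Polynomial.X ^ m * (Polynomial.X + 1) ^ x := by rw [hinner]
  have hco := congrArg (fun p : ℤ[X] => p.coeff K) hpoly
  simp only [Polynomial.finset_sum_coeff, Polynomial.coeff_C_mul] at hco
  rw [show K = (K - m) + m from (Nat.sub_add_cancel h).symm, Polynomial.coeff_X_pow_mul] at hco
  simp only [Polynomial.coeff_X_add_one_pow, Nat.sub_add_cancel h] at hco
  exact hco

private lemma Fm_rec (m n : ℕ) (hm : 1 ≤ m) (hodd : Odd m) :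
    Fm m (n + m) = -∑ j ∈ Finset.Ico 1 m, (-1 : ℤ) ^ j * (m.choose j : ℤ) * Fm m (n + m - j) := by
  have hT : ∑ j ∈ Finset.range (m + 1), (-1 : ℤ) ^ j * (m.choose j : ℤ) * Fm m (n + m - j)
      = -(Fm m n) := by
    have h1 : ∑ j ∈ Finset.range (m + 1), (-1 : ℤ) ^ j * (m.choose j : ℤ) * Fm m (n + m - j)
        = ∑ i ∈ Finset.range (n + m + 1), (-1 : ℤ) ^ i *
            (∑ j ∈ Finset.range (m + 1),
              (-1 : ℤ) ^ j * (m.choose j : ℤ) * ((n + (m - j)).choose (i * m) : ℤ)) := by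
      have hFj : ∀ j ∈ Finset.range (m + 1), (-1 : ℤ) ^ j * (m.choose j : ℤ) * Fm m (n + m - j)
          = ∑ i ∈ Finset.range (n + m + 1),
              (-1 : ℤ) ^ j * (m.choose j : ℤ) * ((-1 : ℤ) ^ i * ((n + (m - j)).choose (i * m) : ℤ)) := by
        intro j hj
        rw [Finset.mem_range] at hj
        have hjm : j ≤ m := by omega
        have harg : n + m - j = n + (m - j) := by omega
        have hlt : n + (m - j) < (n + m + 1) * m :=
          lt_of_lt_of_le (by omega) (Nat.le_mul_of_pos_right _ (by omega))
        rw [harg, Fm_eq m (n + (m - j)) hm (B := n + m) hlt, Finset.mul_sum]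
      rw [Finset.sum_congr rfl hFj, Finset.sum_comm]
      refine Finset.sum_congr rfl fun i _ => ?_
      rw [Finset.mul_sum]
      refine Finset.sum_congr rfl fun j _ => ?_
      ring
    rw [h1]
    have h2 : ∀ i ∈ Finset.range (n + m + 1),
        (-1 : ℤ) ^ i * (∑ j ∈ Finset.range (m + 1),
          (-1 : ℤ) ^ j * (m.choose j : ℤ) * ((n + (m - j)).choose (i * m) : ℤ))
        = (-1 : ℤ) ^ i * (if i = 0 then 0 else ((n.choose (i * m - m)) : ℤ)) := by
      intro i _
      congr 1
      rcases Nat.eq_zero_or_pos i with rfl | hi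
      · simp only [Nat.zero_mul, Nat.choose_zero_right, Nat.cast_one, mul_one, if_pos rfl]
        exact Int.alternating_sum_range_choose_of_ne (by omega)
      · rw [if_neg (by omega)]
        exact diff_identity m (i * m) n (le_trans (by omega : m ≤ 1 * m) (Nat.mul_le_mul_right m hi))
    rw [Finset.sum_congr rfl h2, Finset.sum_range_succ']
    have h3 : ∀ i ∈ Finset.range (n + m),
        (-1 : ℤ) ^ (i + 1) * (if i + 1 = 0 then 0 else ((n.choose ((i + 1) * m - m)) : ℤ))
        = -((-1 : ℤ) ^ i * ((n.choose (i * m)) : ℤ)) := by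
      intro i _
      rw [if_neg (by omega)]
      have : (i + 1) * m - m = i * m := by
        rw [Nat.succ_mul, Nat.add_sub_cancel]
      rw [this, pow_succ]
      ring
    rw [Finset.sum_congr rfl h3]
    have h4 : (∑ i ∈ Finset.range (n + m), -((-1 : ℤ) ^ i * ((n.choose (i * m)) : ℤ)))
        = -(Fm m n) := by
      rw [Finset.sum_neg_distrib]
      congr 1
      have hnm1 : n + m = (n + m - 1) + 1 := by omega
      have hlt : n < (n + m - 1 + 1) * m :=
        lt_of_lt_of_le (by omega) (Nat.le_mul_of_pos_right _ (by omega))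
      rw [hnm1]
      exact (Fm_eq m n hm (B := n + m - 1) hlt).symm
    simpa using h4
  -- split the range sum
  have hsplit : ∑ j ∈ Finset.range (m + 1), (-1 : ℤ) ^ j * (m.choose j : ℤ) * Fm m (n + m - j)
      = Fm m (n + m) + (∑ j ∈ Finset.Ico 1 m, (-1 : ℤ) ^ j * (m.choose j : ℤ) * Fm m (n + m - j))
        + (-(Fm m n)) := by
    rw [Finset.range_eq_Ico, Finset.sum_eq_sum_Ico_succ_bot (by omega : 0 < m + 1),
      Finset.sum_Ico_succ_top (by omega : 1 ≤ m)]
    simp only [pow_zero, Nat.choose_zero_right, Nat.cast_one, one_mul, Nat.sub_zero,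
      Nat.choose_self, Nat.add_sub_cancel, hodd.neg_one_pow, mul_one]
    ring
  rw [hsplit] at hT
  linarith

private lemma arith (ℓ s j n t : ℕ) (hℓ : 2 ≤ ℓ) (hs : 1 ≤ s) (hj1 : 1 ≤ j)
    (hjm : j < ℓ ^ s) (ht : t ≤ s - 1) (htj : ℓ ^ t ∣ j) (hn : ℓ ^ s ≤ n) :
    (n - ℓ ^ (s - 1)) / (ℓ ^ (s - 1) * (ℓ - 1)) ≤
      (s - t) + (n - j - ℓ ^ (s - 1)) / (ℓ ^ (s - 1) * (ℓ - 1)) := by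
  set P := ℓ ^ (s - 1) with hP
  set E := P * (ℓ - 1) with hE
  have hm : ℓ ^ s = P * ℓ := by rw [hP, ← pow_succ]; congr 1; omega
  have hPpos : 0 < P := Nat.pow_pos (by omega)
  have hEpos : 0 < E := Nat.mul_pos hPpos (by omega)
  have hEP : E + P = P * ℓ := by
    rw [hE, ← Nat.mul_succ]
    congr 1
    omega
  rcases Nat.lt_or_ge t (s - 1) with htlt | hteq
  · have h2 : 2 ≤ s - t := by omega
    have h2e : P * ℓ ≤ 2 * E := by
      rw [hE]
      calc P * ℓ ≤ P * (2 * (ℓ - 1)) := Nat.mul_le_mul_left P (by omega)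
        _ = 2 * (P * (ℓ - 1)) := by ring
    have hj2e : j < 2 * E := by omega
    calc (n - P) / E ≤ ((n - j - P) + 2 * E) / E := Nat.div_le_div_right (by omega)
      _ = (n - j - P) / E + 2 := Nat.add_mul_div_right _ _ hEpos
      _ ≤ (s - t) + (n - j - P) / E := by omega
  · have htv : t = s - 1 := le_antisymm ht hteq
    obtain ⟨u, hu⟩ := htj
    rw [htv, ← hP] at hu
    have hul : u < ℓ := by
      by_contra hc
      push_neg at hc
      have : P * ℓ ≤ P * u := Nat.mul_le_mul_left P hc
      omega
    have hjE : j ≤ E := by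
      rw [hu, hE]
      exact Nat.mul_le_mul_left P (by omega)
    have hst : s - t = 1 := by omega
    calc (n - P) / E ≤ ((n - j - P) + E) / E := Nat.div_le_div_right (by omega)
      _ = (n - j - P) / E + 1 := Nat.add_div_right _ hEpos
      _ = (s - t) + (n - j - P) / E := by omega

private lemma key (ℓ s : ℕ) (hℓ : ℓ.Prime) (hodd : Odd ℓ) (hs : 1 ≤ s) :
    ∀ n, (ℓ : ℤ) ^ ((n - ℓ ^ (s - 1)) / (ℓ ^ (s - 1) * (ℓ - 1))) ∣ Fm (ℓ ^ s) n := by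
  have hℓ2 : 2 ≤ ℓ := hℓ.two_le
  have hm1 : 1 ≤ ℓ ^ s := Nat.one_le_pow _ _ (by omega)
  intro n
  induction n using Nat.strong_induction_on with
  | _ n ih =>
    by_cases hnm : n < ℓ ^ s
    · have hEP : ℓ ^ (s - 1) * (ℓ - 1) + ℓ ^ (s - 1) = ℓ ^ s := by
        rw [← Nat.mul_succ, show (ℓ - 1).succ = ℓ from by omega, ← pow_succ]
        congr 1
        omega
      have hlt : n - ℓ ^ (s - 1) < ℓ ^ (s - 1) * (ℓ - 1) := by
        have h2 : n < ℓ ^ (s - 1) * (ℓ - 1) + ℓ ^ (s - 1) := by rw [hEP]; exact hnm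
        have hA : 0 < ℓ ^ (s - 1) * (ℓ - 1) :=
          Nat.mul_pos (Nat.pow_pos (by omega)) (by omega)
        omega
      have h0 : (n - ℓ ^ (s - 1)) / (ℓ ^ (s - 1) * (ℓ - 1)) = 0 :=
        Nat.div_eq_of_lt hlt
      rw [h0, pow_zero]
      exact one_dvd _
    · push_neg at hnm
      have hrec := Fm_rec (ℓ ^ s) (n - ℓ ^ s) hm1 (hodd.pow)
      have hn' : n - ℓ ^ s + ℓ ^ s = n := Nat.sub_add_cancel hnm
      rw [hn'] at hrec
      rw [hrec]
      rw [dvd_neg]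
      refine Finset.dvd_sum fun j hj => ?_
      rw [Finset.mem_Ico] at hj
      obtain ⟨hj1, hj2⟩ := hj
      -- multiplicity facts
      set t := multiplicity ℓ j with htdef
      have htdvd : ℓ ^ t ∣ j := pow_multiplicity_dvd ℓ j
      have htle : t ≤ s - 1 := by
        have h1 : ℓ ^ t ≤ j := Nat.le_of_dvd (by omega) htdvd
        have h2 : ℓ ^ t < ℓ ^ s := lt_of_le_of_lt h1 hj2
        have := (Nat.pow_lt_pow_iff_right hℓ.one_lt).mp h2
        omega
      have hcd : (ℓ : ℕ) ^ (s - t) ∣ (ℓ ^ s).choose j := by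
        apply pow_dvd_of_le_emultiplicity
        rw [hℓ.emultiplicity_choose_prime_pow (le_of_lt hj2) (by omega : j ≠ 0)]
      have hIH := ih (n - j) (by omega)
      have hle := arith ℓ s j n t hℓ2 hs hj1 hj2 htle htdvd hnm
      have hdvd2 : (ℓ : ℤ) ^ ((n - ℓ ^ (s - 1)) / (ℓ ^ (s - 1) * (ℓ - 1))) ∣
          ((ℓ ^ s).choose j : ℤ) * Fm (ℓ ^ s) (n - j) := by
        refine dvd_trans (pow_dvd_pow _ hle) ?_
        rw [pow_add]
        have hcd' : (ℓ : ℤ) ^ (s - t) ∣ (((ℓ ^ s).choose j : ℕ) : ℤ) := by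
          exact_mod_cast Int.natCast_dvd_natCast.mpr hcd
        exact mul_dvd_mul hcd' hIH
      have := hdvd2.mul_left ((-1 : ℤ) ^ j)
      rwa [← mul_assoc] at this

theorem stmt_5 (ℓ N : ℕ) (hℓ : ℓ.Prime) (hodd : Odd ℓ) (hN : 1 ≤ N) (s : ℕ) :
    (ℓ : ℤ) ^ (ℓ * N) ∣
      ∑ i ∈ Finset.range (ℓ * N - N + 1),
        (-1 : ℤ) ^ i * ((ℓ ^ s * (ℓ * N - N + 1) - 1).choose (i * ℓ ^ s)) := by
  have hℓ2 : 2 ≤ ℓ := hℓ.two_le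
  rcases Nat.eq_zero_or_pos s with rfl | hs
  · -- s = 0 : alternating sum of binomial coefficients vanishes
    simp only [pow_zero, one_mul, mul_one]
    have hM : ℓ * N - N + 1 - 1 = ℓ * N - N := by omega
    rw [hM]
    have hMpos : ℓ * N - N ≠ 0 := by
      have : 2 * N ≤ ℓ * N := Nat.mul_le_mul_right N (by omega)
      omega
    rw [Int.alternating_sum_range_choose_of_ne hMpos]
    exact dvd_zero _
  · obtain ⟨c, rfl⟩ : ∃ c, ℓ = c + 1 := ⟨ℓ - 1, by omega⟩
    obtain ⟨s', rfl⟩ : ∃ s', s = s' + 1 := ⟨s - 1, by omega⟩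
    have hc1 : 1 ≤ c := by omega
    set m : ℕ := (c + 1) ^ (s' + 1) with hmdef
    set M : ℕ := (c + 1) * N - N with hMdef
    set n₀ : ℕ := m * (M + 1) - 1 with hn₀
    clear_value m M n₀
    have hm1 : 1 ≤ m := by rw [hmdef]; exact Nat.one_le_pow _ _ (by omega)
    have hMc : M = c * N := by
      rw [hMdef, Nat.succ_mul]
      omega
    have hgoal_eq : ∑ i ∈ Finset.range (M + 1), (-1 : ℤ) ^ i * ((n₀.choose (i * m)) : ℤ)
        = Fm m n₀ := by
      refine (Fm_eq m n₀ hm1 (B := M) ?_).symm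
      have h3 : 0 < (M + 1) * m := Nat.mul_pos (Nat.succ_pos M) hm1
      have h4 : (M + 1) * m = m * (M + 1) := Nat.mul_comm _ _
      omega
    rw [hgoal_eq]
    have hkey := key (c + 1) (s' + 1) hℓ hodd (by omega) n₀
    rw [← hmdef] at hkey
    set P : ℕ := (c + 1) ^ s' with hP
    set E : ℕ := P * c with hE
    clear_value P E
    have hPpos : 0 < P := by rw [hP]; exact Nat.pow_pos (by omega)
    have hEpos : 0 < E := by rw [hE]; exact Nat.mul_pos hPpos (by omega)
    have hexp : (n₀ - (c + 1) ^ (s' + 1 - 1)) / ((c + 1) ^ (s' + 1 - 1) * (c + 1 - 1))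
        = (c + 1) * N := by
      have h1 : s' + 1 - 1 = s' := by omega
      have h2 : c + 1 - 1 = c := by omega
      rw [h1, h2, ← hP, ← hE]
      have hexpand : m * (M + 1) = (c + 1) * N * E + E + P := by
        rw [hmdef, hMc, hE, hP, pow_succ]
        ring
      have hcomm : E * ((c + 1) * N) = (c + 1) * N * E := Nat.mul_comm _ _
      have hQ : n₀ - P = E * ((c + 1) * N) + (E - 1) := by omega
      rw [hQ, Nat.mul_add_div hEpos, Nat.div_eq_of_lt (by omega), Nat.add_zero]
    rw [hexp] at hkey
    exact hkey
end

section
/- Let ℓ be an odd prime and N ≥ 1. For every integer s ≥ 0, ∑_{0 ≤ i ≤ N-1} (-1)^i · C(ℓ^s(ℓN - N + 1) - 1, i·ℓ^{s+1}) ≡ (-ℓ)^{N-1} (mod ℓ^N). -/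
open scoped BigOperators

open Polynomial Finset


lemma NT2 (ℓ s k : ℕ) (hℓ : ℓ.Prime) (h0 : 0 < k) (hk : k < ℓ ^ s) :
    ℓ ^ 2 ∣ (ℓ ^ (s+1)).choose k := by
  have hs : 1 ≤ s := by
    rcases Nat.eq_zero_or_pos s with rfl | h; · simp at hk; omega
    · exact h
  have hC : 0 < (ℓ ^ (s+1)).choose k :=
    Nat.choose_pos (hk.le.trans (pow_le_pow_right₀ hℓ.one_lt.le (by omega)))
  have key : ℓ ^ (s+1) * (ℓ ^ (s+1) - 1).choose (k-1) = (ℓ ^ (s+1)).choose k * k := by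
    have := Nat.add_one_mul_choose_eq (ℓ ^ (s+1) - 1) (k-1)
    have h1 : ℓ ^ (s+1) - 1 + 1 = ℓ ^ (s+1) := Nat.succ_pred_eq_of_pos (pow_pos hℓ.pos _)
    have h2 : k - 1 + 1 = k := Nat.succ_pred_eq_of_pos h0
    rw [h1, h2] at this
    exact this
  have hdvd : ℓ ^ (s+1) ∣ (ℓ ^ (s+1)).choose k * k := ⟨_, key.symm⟩
  have hkf : k.factorization ℓ ≤ s - 1 := by
    by_contra h
    push_neg at h
    have : ℓ ^ s ∣ k := dvd_trans (pow_dvd_pow ℓ (by omega)) (Nat.ordProj_dvd k ℓ)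
    exact absurd (Nat.le_of_dvd h0 this) (by omega)
  have hfge : s + 1 ≤ ((ℓ ^ (s+1)).choose k * k).factorization ℓ := by
    rw [← hℓ.pow_dvd_iff_le_factorization (by positivity)]
    exact hdvd
  rw [Nat.factorization_mul hC.ne' h0.ne'] at hfge
  simp only [Finsupp.add_apply] at hfge
  have : 2 ≤ ((ℓ ^ (s+1)).choose k).factorization ℓ := by omega
  exact dvd_trans (pow_dvd_pow ℓ this) (Nat.ordProj_dvd _ ℓ)

lemma NT3 (ℓ s : ℕ) (hℓ : ℓ.Prime) :
    (ℓ ^ (s+1)).choose (ℓ ^ s) = ℓ * (ℓ ^ (s+1) - 1).choose (ℓ ^ s - 1) := by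
  have key : ℓ ^ (s+1) * (ℓ ^ (s+1) - 1).choose (ℓ^s-1) = (ℓ ^ (s+1)).choose (ℓ^s) * ℓ^s := by
    have := Nat.add_one_mul_choose_eq (ℓ ^ (s+1) - 1) (ℓ^s-1)
    have h1 : ℓ ^ (s+1) - 1 + 1 = ℓ ^ (s+1) := Nat.succ_pred_eq_of_pos (pow_pos hℓ.pos _)
    have h2 : ℓ^s - 1 + 1 = ℓ^s := Nat.succ_pred_eq_of_pos (pow_pos hℓ.pos _)
    rw [h1, h2] at this
    exact this
  refine Nat.eq_of_mul_eq_mul_right (pow_pos hℓ.pos s) ?_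
  rw [← key]; ring

lemma NT4 (ℓ s : ℕ) (hℓ : ℓ.Prime) :
    ((ℓ ^ (s+1) - 1).choose (ℓ ^ s - 1) : ℤ) ≡ 1 [ZMOD ℓ] := by
  haveI : Fact ℓ.Prime := ⟨hℓ⟩
  induction s with
  | zero => simp
  | succ s ih =>
    have lucas := Choose.choose_modEq_choose_mod_mul_choose_div
      (n := ℓ ^ (s+2) - 1) (k := ℓ ^ (s+1) - 1) (p := ℓ)
    have hℓ2 : 2 ≤ ℓ := hℓ.two_le
    have ha : 1 ≤ ℓ ^ (s+1) := Nat.one_le_pow _ _ hℓ.pos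
    have ha2 : 1 ≤ ℓ ^ (s+2) := Nat.one_le_pow _ _ hℓ.pos
    have hb : 1 ≤ ℓ ^ s := Nat.one_le_pow _ _ hℓ.pos
    have e1 : ℓ ^ (s+2) - 1 = ℓ * (ℓ ^ (s+1) - 1) + (ℓ - 1) := by
      have hp : ℓ ^ (s+2) = ℓ * ℓ ^ (s+1) := by ring
      zify [ha, ha2, hℓ.pos]
      ring
    have e2 : ℓ ^ (s+1) - 1 = ℓ * (ℓ ^ s - 1) + (ℓ - 1) := by
      have hp : ℓ ^ (s+1) = ℓ * ℓ ^ s := by ring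
      zify [ha, hb, hℓ.pos]
      ring
    have hmod1 : (ℓ ^ (s+2) - 1) % ℓ = ℓ - 1 := by
      rw [e1, Nat.mul_add_mod, Nat.mod_eq_of_lt (by omega)]
    have hdiv1 : (ℓ ^ (s+2) - 1) / ℓ = ℓ ^ (s+1) - 1 := by
      rw [e1, Nat.mul_add_div hℓ.pos, Nat.div_eq_of_lt (by omega)]; omega
    have hmod2 : (ℓ ^ (s+1) - 1) % ℓ = ℓ - 1 := by
      rw [e2, Nat.mul_add_mod, Nat.mod_eq_of_lt (by omega)]
    have hdiv2 : (ℓ ^ (s+1) - 1) / ℓ = ℓ ^ s - 1 := by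
      rw [e2, Nat.mul_add_div hℓ.pos, Nat.div_eq_of_lt (by omega)]; omega
    rw [hmod1, hdiv1, hmod2, hdiv2, Nat.choose_self] at lucas
    refine lucas.trans ?_
    simpa using ih

noncomputable section

lemma Phi_eq (m : ℕ) :
    (∑ j ∈ range m, (X:ℤ[X]) ^ j) = ∑ j ∈ range m, (m.choose (j+1) : ℤ[X]) * (X - 1) ^ j := by
  have hY : (X - 1 : ℤ[X]) ≠ 0 := by simpa using X_sub_C_ne_zero (1:ℤ)
  apply mul_right_cancel₀ hY
  rw [geom_sum_mul]
  have expand : (X:ℤ[X])^m = ∑ k ∈ range (m+1), (X-1)^k * (m.choose k : ℤ[X]) := by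
    conv_lhs => rw [show (X:ℤ[X]) = (X - 1) + 1 by ring, add_pow]
    simp
  rw [expand, sum_range_succ']
  simp only [pow_zero, Nat.choose_zero_right, Nat.cast_one, one_mul, add_sub_cancel_right]
  rw [sum_mul]
  exact sum_congr rfl fun j _ => by ring

lemma base_id (ℓ s : ℕ) (hℓ : ℓ.Prime) :
    (X - 1 : ℤ[X])^(ℓ^(s+1) - 1)
      = (∑ j ∈ range (ℓ^(s+1)), X^j)
        + (ℓ:ℤ[X]) * (-∑ j ∈ range (ℓ^(s+1) - 1),
            (((ℓ^(s+1)).choose (j+1) / ℓ : ℕ) : ℤ[X]) * (X-1)^j) := by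
  have hm : 1 ≤ ℓ^(s+1) := Nat.one_le_pow _ _ hℓ.pos
  have e : ℓ^(s+1) - 1 + 1 = ℓ^(s+1) := by omega
  have split : (∑ j ∈ range (ℓ^(s+1)), ((ℓ^(s+1)).choose (j+1) : ℤ[X]) * (X-1)^j)
      = (∑ j ∈ range (ℓ^(s+1) - 1), ((ℓ^(s+1)).choose (j+1) : ℤ[X]) * (X-1)^j)
        + (X-1)^(ℓ^(s+1)-1) := by
    have h := sum_range_succ (fun j => ((ℓ^(s+1)).choose (j+1) : ℤ[X]) * (X-1)^j) (ℓ^(s+1) - 1)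
    rw [e] at h
    rw [h, Nat.choose_self]
    simp
  have cong : ∑ j ∈ range (ℓ^(s+1) - 1),
        (ℓ:ℤ[X]) * ((((ℓ^(s+1)).choose (j+1) / ℓ : ℕ) : ℤ[X]) * (X-1)^j)
      = ∑ j ∈ range (ℓ^(s+1) - 1), ((ℓ^(s+1)).choose (j+1) : ℤ[X]) * (X-1)^j := by
    refine sum_congr rfl fun j hj => ?_
    have hdvd : ℓ ∣ (ℓ^(s+1)).choose (j+1) :=
      hℓ.dvd_choose_pow (Nat.succ_ne_zero j) (by simp only [mem_range] at hj; omega)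
    rw [← mul_assoc, ← Nat.cast_mul, Nat.mul_div_cancel' hdvd]
  rw [Phi_eq, split, mul_neg, Finset.mul_sum, cong]
  ring

lemma v_struct (ℓ s : ℕ) (hℓ : ℓ.Prime) :
    ∃ a b : ℤ[X],
      (-∑ j ∈ range (ℓ^(s+1) - 1), (((ℓ^(s+1)).choose (j+1) / ℓ : ℕ) : ℤ[X]) * (X-1)^j)
      = -(X-1)^(ℓ^s - 1) + (X-1)^(ℓ^s) * a + (ℓ:ℤ[X]) * b := by
  have hℓ2 : 2 ≤ ℓ := hℓ.two_le
  have hP : 1 ≤ ℓ^s := Nat.one_le_pow _ _ hℓ.pos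
  have hPm : 2 * ℓ^s ≤ ℓ^(s+1) := by
    have : ℓ^(s+1) = ℓ * ℓ^s := by ring
    rw [this]; exact Nat.mul_le_mul_right _ hℓ2
  have hPle : ℓ^s ≤ ℓ^(s+1) - 1 := by omega
  set f : ℕ → ℤ[X] := fun j => (((ℓ^(s+1)).choose (j+1) / ℓ : ℕ) : ℤ[X]) * (X-1)^j with hf
  -- split at ℓ^s
  have hsplit : ∑ j ∈ range (ℓ^(s+1) - 1), f j
      = ∑ j ∈ range (ℓ^s), f j + ∑ j ∈ Ico (ℓ^s) (ℓ^(s+1) - 1), f j := by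
    rw [range_eq_Ico, ← sum_Ico_consecutive f (Nat.zero_le _) hPle, ← range_eq_Ico]
  -- peel top of first part
  have e2 : ℓ^s - 1 + 1 = ℓ^s := by omega
  have hsplit2 : ∑ j ∈ range (ℓ^s), f j
      = ∑ j ∈ range (ℓ^s - 1), f j + f (ℓ^s - 1) := by
    have h := sum_range_succ f (ℓ^s - 1)
    rw [e2] at h; exact h
  -- the middle term
  obtain ⟨t, ht⟩ : ∃ t : ℤ, ((ℓ ^ (s+1) - 1).choose (ℓ ^ s - 1) : ℤ) = 1 + ℓ * t := by
    have h4 := (NT4 ℓ s hℓ).dvd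
    obtain ⟨t, ht⟩ := h4
    exact ⟨-t, by linarith⟩
  have hmid : f (ℓ^s - 1) = (X-1)^(ℓ^s-1) + (ℓ:ℤ[X]) * (Polynomial.C t * (X-1)^(ℓ^s-1)) := by
    rw [hf]
    simp only []
    rw [e2, NT3 ℓ s hℓ, Nat.mul_div_cancel_left _ hℓ.pos]
    rw [show (((ℓ ^ (s+1) - 1).choose (ℓ ^ s - 1) : ℕ) : ℤ[X])
        = Polynomial.C (((ℓ ^ (s+1) - 1).choose (ℓ ^ s - 1) : ℤ)) from (Polynomial.C_eq_natCast _).symm]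
    rw [ht, map_add, map_one, map_mul, Polynomial.C_eq_natCast]
    ring
  -- first part is divisible by ℓ
  have hlow : ∑ j ∈ range (ℓ^s - 1), f j
      = (ℓ:ℤ[X]) * ∑ j ∈ range (ℓ^s - 1),
          (((ℓ^(s+1)).choose (j+1) / ℓ^2 : ℕ) : ℤ[X]) * (X-1)^j := by
    rw [mul_sum]
    refine sum_congr rfl fun j hj => ?_
    simp only [mem_range] at hj
    obtain ⟨u, hu⟩ := NT2 ℓ s (j+1) hℓ (Nat.succ_pos j) (by omega)
    have d1 : (ℓ^(s+1)).choose (j+1) / ℓ = ℓ * u := by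
      rw [hu, pow_two, mul_assoc, Nat.mul_div_cancel_left _ hℓ.pos]
    have d2 : (ℓ^(s+1)).choose (j+1) / ℓ^2 = u := by
      rw [hu, Nat.mul_div_cancel_left _ (by positivity)]
    rw [hf]
    simp only []
    rw [d1, d2]
    push_cast
    ring
  -- upper part has a factor (X-1)^(ℓ^s)
  have hup : ∑ j ∈ Ico (ℓ^s) (ℓ^(s+1) - 1), f j
      = (X-1)^(ℓ^s) * ∑ j ∈ range (ℓ^(s+1) - 1 - ℓ^s),
          (((ℓ^(s+1)).choose (ℓ^s + j + 1) / ℓ : ℕ) : ℤ[X]) * (X-1)^j := by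
    rw [sum_Ico_eq_sum_range, mul_sum]
    refine sum_congr rfl fun j hj => ?_
    rw [hf]
    simp only []
    rw [pow_add]
    ring
  refine ⟨-∑ j ∈ range (ℓ^(s+1) - 1 - ℓ^s),
      (((ℓ^(s+1)).choose (ℓ^s + j + 1) / ℓ : ℕ) : ℤ[X]) * (X-1)^j,
    -(∑ j ∈ range (ℓ^s - 1), (((ℓ^(s+1)).choose (j+1) / ℓ^2 : ℕ) : ℤ[X]) * (X-1)^j)
      - Polynomial.C t * (X-1)^(ℓ^s-1), ?_⟩
  rw [hsplit, hsplit2, hmid, hlow, hup]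
  ring

lemma key_s6 (ℓ s : ℕ) (hℓ : ℓ.Prime) (K : ℕ) :
    ∃ ρ a b q : ℤ[X],
      (X - 1 : ℤ[X])^(ℓ^s*((ℓ-1)*(K+1)+1) - 1)
        = (-(ℓ:ℤ[X]))^K * (∑ j ∈ range (ℓ^(s+1)), X^j)
          + (-(ℓ:ℤ[X]))^(K+1) * ρ + ((X:ℤ[X])^(ℓ^(s+1)) - 1) * q
      ∧ ρ = (X-1)^(ℓ^s - 1) + (X-1)^(ℓ^s) * a + (ℓ:ℤ[X]) * b := by
  have hl2 : 2 ≤ ℓ := hℓ.two_le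
  have hP : 1 ≤ ℓ^s := Nat.one_le_pow _ _ hℓ.pos
  have hq : ℓ^(s+1) = ℓ*ℓ^s := by ring
  have hsub : (ℓ-1)*ℓ^s = ℓ*ℓ^s - ℓ^s := by rw [Nat.sub_one_mul]
  have hge : 2*ℓ^s ≤ ℓ*ℓ^s := Nat.mul_le_mul_right _ hl2
  set v : ℤ[X] := -∑ j ∈ range (ℓ^(s+1) - 1),
      (((ℓ^(s+1)).choose (j+1) / ℓ : ℕ) : ℤ[X]) * (X-1)^j with hvdef
  obtain ⟨va, vb, hv⟩ := v_struct ℓ s hℓ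
  have hbase := base_id ℓ s hℓ
  rw [← hvdef] at hv hbase
  induction K with
  | zero =>
    have he0 : ℓ^s*((ℓ-1)*(0+1)+1) - 1 = ℓ^(s+1) - 1 := by
      have h1 : (ℓ-1)*(0+1)+1 = ℓ := by omega
      rw [h1, hq]
      have h2 : ℓ*ℓ^s = ℓ^s*ℓ := by ring
      rw [h2]
    refine ⟨-v, -va, -vb, 0, ?_, ?_⟩
    · rw [he0, hbase]; ring
    · rw [hv]; ring
  | succ K ih =>
    obtain ⟨ρ, a, b, q, hmain, hρ⟩ := ih
    -- nat exponent helpers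
    have he : ℓ^s*((ℓ-1)*(K+1+1)+1) - 1
        = (ℓ^s*((ℓ-1)*(K+1)+1) - 1) + (ℓ-1)*ℓ^s := by
      have hB : ℓ^s*((ℓ-1)*(K+1+1)+1) = ℓ^s*((ℓ-1)*(K+1)+1) + (ℓ-1)*ℓ^s := by ring
      have hB0 : 1 ≤ ℓ^s*((ℓ-1)*(K+1)+1) := Nat.one_le_iff_ne_zero.mpr (by positivity)
      omega
    have hYe : (X-1:ℤ[X])^(ℓ^s*((ℓ-1)*(K+1+1)+1) - 1)
        = (X-1)^(ℓ^s*((ℓ-1)*(K+1)+1) - 1) * (X-1)^((ℓ-1)*ℓ^s) := by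
      rw [he, pow_add]
    have r0 : (X-1:ℤ[X])^(ℓ^s-1) * (X-1) = (X-1)^(ℓ^s) := by
      rw [← pow_succ]; congr 1; omega
    have r1 : (X-1:ℤ[X])^(ℓ^s-1) * (X-1)^((ℓ-1)*ℓ^s) = (X-1)^(ℓ^(s+1)-1) := by
      rw [← pow_add]; congr 1; omega
    have r2 : (X-1:ℤ[X])^(ℓ^s) * (X-1)^((ℓ-1)*ℓ^s) = (X-1)^(ℓ^(s+1)-1) * (X-1) := by
      rw [← pow_add, ← pow_succ]; congr 1; omega
    have r3 : (X-1:ℤ[X])^((ℓ-1)*ℓ^s) = (X-1) * (X-1)^((ℓ-1)*ℓ^s - 1) := by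
      rw [← pow_succ']; congr 1; omega
    have r35 : (X-1:ℤ[X])^((ℓ-1)*ℓ^s) = (X-1)^(ℓ^s) * (X-1)^((ℓ-1)*ℓ^s - ℓ^s) := by
      rw [← pow_add]; congr 1; omega
    have r5 : (∑ j ∈ range (ℓ^(s+1)), (X:ℤ[X])^j) * (X-1) = X^(ℓ^(s+1)) - 1 :=
      geom_sum_mul _ _
    refine ⟨-(v + v*(X-1)*a + b*(X-1)^((ℓ-1)*ℓ^s)),
            -va + a + -(va*(X-1)*a) + -(b*(X-1)^((ℓ-1)*ℓ^s - ℓ^s)),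
            -vb + -(vb*(X-1)*a),
            (-(ℓ:ℤ[X]))^K * (X-1)^((ℓ-1)*ℓ^s - 1) + (-(ℓ:ℤ[X]))^(K+1) * a
              + q * (X-1)^((ℓ-1)*ℓ^s),
            ?_, ?_⟩
    · rw [hYe, hmain, hρ]
      linear_combination
        ((-(ℓ:ℤ[X]))^K * (∑ j ∈ range (ℓ^(s+1)), (X:ℤ[X])^j)) * r3
        + ((-(ℓ:ℤ[X]))^K * (X-1)^((ℓ-1)*ℓ^s - 1)
            + (-(ℓ:ℤ[X]))^K * (-(ℓ:ℤ[X])) * a) * r5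
        + ((-(ℓ:ℤ[X]))^K * (-(ℓ:ℤ[X]))) * r1
        + ((-(ℓ:ℤ[X]))^K * (-(ℓ:ℤ[X]))
            + (-(ℓ:ℤ[X]))^K * (-(ℓ:ℤ[X])) * a * (X-1)) * hbase
        + ((-(ℓ:ℤ[X]))^K * (-(ℓ:ℤ[X])) * a) * r2
    · rw [hv, r35]
      linear_combination a * r0

variable (m : ℕ)

def phi (m : ℕ) : ℤ[X] →+* AddMonoidAlgebra ℤ (ZMod m) :=
  (AddMonoidAlgebra.mapDomainRingHom ℤ (Nat.castAddMonoidHom (ZMod m))).comp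
    (Polynomial.toFinsuppIso ℤ).toRingHom

def c0 (m : ℕ) : AddMonoidAlgebra ℤ (ZMod m) →+ ℤ :=
  (Finsupp.applyAddHom (0 : ZMod m)).comp AddMonoidAlgebra.coeffAddEquiv.toAddMonoidHom

lemma phi_X_pow (k : ℕ) : phi m (X^k) = AddMonoidAlgebra.single ((k : ZMod m)) (1:ℤ) := by
  rw [map_pow]
  have hX : phi m X = AddMonoidAlgebra.single ((1 : ZMod m)) (1:ℤ) := by
    simp [phi, Polynomial.toFinsupp_X, Finsupp.mapDomain_single]
  rw [hX, AddMonoidAlgebra.single_pow]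
  congr 1 <;> simp [nsmul_eq_mul]

lemma phi_M : phi m ((X:ℤ[X])^m - 1) = 0 := by
  rw [map_sub, map_one, phi_X_pow, ZMod.natCast_self, AddMonoidAlgebra.one_def, sub_self]

lemma c0_phi_Phi (hm : 2 ≤ m) : c0 m (phi m (∑ j ∈ range m, (X:ℤ[X])^j)) = 1 := by
  rw [map_sum, map_sum]
  have : ∀ j ∈ range m, c0 m (phi m ((X:ℤ[X])^j))
      = if (j : ZMod m) = 0 then (1:ℤ) else 0 := by
    intro j hj
    rw [phi_X_pow]
    show (Finsupp.single ((j:ZMod m)) (1:ℤ)) 0 = _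
    rw [Finsupp.single_apply]
  rw [sum_congr rfl this]
  haveI : NeZero m := ⟨by omega⟩
  rw [Finset.sum_eq_single_of_mem 0 (mem_range.mpr (by omega))]
  · simp
  · intro j hj hj0
    simp only [mem_range] at hj
    rw [if_neg]
    rw [ZMod.natCast_eq_zero_iff]
    intro hdvd
    exact hj0 (Nat.eq_zero_of_dvd_of_lt hdvd hj)

end

section eval

lemma hexp2 (n : ℕ) : (X - 1:ℤ[X])^n
    = ∑ k ∈ range (n+1), ((-1:ℤ)^(n-k) * (n.choose k : ℤ)) • (X:ℤ[X])^k := by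
  rw [show (X - 1:ℤ[X]) = X + (-1) from by ring, add_pow]
  refine sum_congr rfl fun k hk => ?_
  rw [smul_eq_C_mul, map_mul, map_pow, map_neg, map_one, Polynomial.C_eq_natCast]
  ring

lemma c0_phi_pow (m n : ℕ) : c0 m (phi m ((X - 1:ℤ[X])^n))
    = ∑ k ∈ range (n+1), (if (k : ZMod m) = 0 then (-1:ℤ)^(n-k) * (n.choose k) else 0) := by
  rw [hexp2, map_sum, map_sum]
  refine sum_congr rfl fun k hk => ?_
  rw [map_zsmul, map_zsmul, phi_X_pow]
  show _ * (Finsupp.single ((k:ZMod m)) (1:ℤ)) 0 = _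
  rw [Finsupp.single_apply]
  split_ifs <;> simp

end eval

section reindex

lemma block_sum (m : ℕ) (hm : 0 < m) (g : ℕ → ℤ)
    (hg : ∀ k, ¬ m ∣ k → g k = 0) (N : ℕ) :
    ∑ k ∈ range (m*N), g k = ∑ i ∈ range N, g (i*m) := by
  induction N with
  | zero => simp
  | succ N ih =>
    have h1 : m*(N+1) = m*N + m := by ring
    have h2 : ∑ k ∈ range (m*N + m), g k
        = ∑ k ∈ range (m*N), g k + ∑ k ∈ Ico (m*N) (m*N + m), g k := by
      rw [range_eq_Ico,
        ← sum_Ico_consecutive g (Nat.zero_le (m*N)) (Nat.le_add_right (m*N) m),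
        ← range_eq_Ico]
    have h3 : ∑ k ∈ Ico (m*N) (m*N + m), g k = g (N*m) := by
      rw [Finset.sum_eq_single_of_mem (m*N) (mem_Ico.mpr ⟨le_refl _, by omega⟩)]
      · rw [Nat.mul_comm]
      · intro k hk hk0
        rw [mem_Ico] at hk
        refine hg k fun hdvd => ?_
        obtain ⟨t, rfl⟩ := hdvd
        have ht1 : N ≤ t := Nat.le_of_mul_le_mul_left hk.1 hm
        have ht2 : t < N + 1 := by
          have := hk.2
          rw [← h1] at this
          exact Nat.lt_of_mul_lt_mul_left this
        have : t = N := by omega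
        exact hk0 (by rw [this])
    rw [h1, h2, h3, sum_range_succ, ih]

lemma sum_reindex (m N n : ℕ) (hm : 0 < m) (hmn : n < m*N) (hoddm : Odd m) (hn : Even n) :
    ∑ k ∈ range (n+1), (if (k : ZMod m) = 0 then (-1:ℤ)^(n-k) * (n.choose k) else 0)
    = ∑ i ∈ range N, (-1:ℤ)^i * (n.choose (i*m)) := by
  haveI : NeZero m := ⟨by omega⟩
  have hpar : ∀ k, k ≤ n → (-1:ℤ)^(n-k) = (-1:ℤ)^k := by
    intro k hk
    rcases Nat.even_or_odd k with h | h
    · rw [h.neg_one_pow, ((Nat.even_sub hk).mpr (iff_of_true hn h)).neg_one_pow]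
    · rw [h.neg_one_pow, (Nat.Even.sub_odd hk hn h).neg_one_pow]
  set g : ℕ → ℤ := fun k => if (k : ZMod m) = 0 then (-1:ℤ)^k * (n.choose k) else 0 with hgdef
  have step1 : ∑ k ∈ range (n+1), (if (k : ZMod m) = 0 then (-1:ℤ)^(n-k) * (n.choose k) else 0)
      = ∑ k ∈ range (n+1), g k := by
    refine sum_congr rfl fun k hk => ?_
    rw [mem_range] at hk
    rw [hgdef, hpar k (by omega)]
  have step2 : ∑ k ∈ range (n+1), g k = ∑ k ∈ range (m*N), g k := by
    refine sum_subset ?_ ?_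
    · intro x hx
      rw [mem_range] at hx ⊢
      omega
    · intro k hk hk'
      rw [mem_range] at hk hk'
      have hc : n.choose k = 0 := Nat.choose_eq_zero_of_lt (by omega)
      rw [hgdef]
      simp only [hc, Nat.cast_zero, mul_zero, ite_self]
  have hgz : ∀ k, ¬ m ∣ k → g k = 0 := by
    intro k hk
    rw [hgdef]
    simp only []
    rw [if_neg]
    rwa [ZMod.natCast_eq_zero_iff]
  rw [step1, step2, block_sum m hm g hgz N]
  refine sum_congr rfl fun i hi => ?_
  rw [hgdef]
  simp only []
  rw [if_pos (by rw [ZMod.natCast_eq_zero_iff]; exact dvd_mul_left m i)]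
  congr 1
  rcases Nat.even_or_odd i with h | h
  · rw [h.neg_one_pow, (Nat.even_mul.mpr (Or.inl h)).neg_one_pow]
  · rw [h.neg_one_pow, (Nat.odd_mul.mpr ⟨h, hoddm⟩).neg_one_pow]

end reindex

theorem stmt_6 (ℓ N : ℕ) (hℓ : ℓ.Prime) (hodd : Odd ℓ) (hN : 1 ≤ N) (s : ℕ) :
    (∑ i ∈ Finset.range N,
        (-1 : ℤ) ^ i * ((ℓ ^ s * (ℓ * N - N + 1) - 1).choose (i * ℓ ^ (s + 1))))
      ≡ (-(ℓ : ℤ)) ^ (N - 1) [ZMOD (ℓ : ℤ) ^ N] := by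
  have hl2 := hℓ.two_le
  have hstmt : ℓ * N - N + 1 = (ℓ-1)*((N-1)+1)+1 := by
    have h1 : (ℓ-1)*N = ℓ*N - N := Nat.sub_one_mul ℓ N
    have h2 : (N-1)+1 = N := by omega
    rw [h2, ← h1]
  rw [hstmt]
  set K := N - 1 with hK
  have hNK : N = K + 1 := by omega
  set n := ℓ^s*((ℓ-1)*(K+1)+1) - 1 with hn
  set m := ℓ^(s+1) with hm
  have hm2 : 2 ≤ m := by
    calc 2 ≤ ℓ := hl2
    _ ≤ ℓ^(s+1) := Nat.le_self_pow (by omega) ℓ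
  obtain ⟨ρ, a, b, q, hmain, -⟩ := key_s6 ℓ s hℓ K
  have key_eval : ∀ (c : ℤ) (p : ℤ[X]), c0 m (phi m ((Polynomial.C c) * p)) = c * c0 m (phi m p) := by
    intro c p
    rw [← smul_eq_C_mul, map_zsmul, map_zsmul, smul_eq_mul]
  have hC1 : (-(ℓ:ℤ[X]))^K = Polynomial.C ((-(ℓ:ℤ))^K) := by
    rw [map_pow, map_neg, Polynomial.C_eq_natCast]
  have hC2 : (-(ℓ:ℤ[X]))^(K+1) = Polynomial.C ((-(ℓ:ℤ))^(K+1)) := by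
    rw [map_pow, map_neg, Polynomial.C_eq_natCast]
  rw [hC1, hC2] at hmain
  have happ := congrArg (fun p => c0 m (phi m p)) hmain
  simp only [map_add] at happ
  rw [key_eval, key_eval] at happ
  have hMq : c0 m (phi m (((X:ℤ[X])^m - 1) * q)) = 0 := by
    rw [map_mul, phi_M, zero_mul, map_zero]
  rw [hMq, add_zero, c0_phi_Phi m hm2, mul_one] at happ
  have hoddm : Odd m := hodd.pow
  have hEven : Even n := by
    have ho1 : Odd (ℓ^s) := hodd.pow
    have ho2 : Odd ((ℓ-1)*(K+1)+1) := by
      refine Even.add_one ?_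
      exact (Nat.Odd.sub_odd hodd odd_one).mul_right _
    have ho : Odd (ℓ^s*((ℓ-1)*(K+1)+1)) := ho1.mul ho2
    exact Nat.Odd.sub_odd ho odd_one
  have hlt : n < m*N := by
    have h1 : ℓ^s*((ℓ-1)*(K+1)+1) ≤ m*N := by
      have e1 : m*N = ℓ^s*((ℓ-1)*N+N) := by
        rw [hm, pow_succ]
        have h3 : (ℓ-1)*N+N = ℓ*N := by
          have := Nat.sub_one_mul ℓ N
          have hle : N ≤ ℓ*N := Nat.le_mul_of_pos_left N hℓ.pos
          omega
        rw [h3]; ring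
      rw [e1, ← hNK]
      exact Nat.mul_le_mul_left _ (by omega)
    have h2 : 1 ≤ ℓ^s*((ℓ-1)*(K+1)+1) := Nat.one_le_iff_ne_zero.mpr (by positivity)
    omega
  rw [c0_phi_pow, sum_reindex m N n (by omega) hlt hoddm hEven] at happ
  rw [happ]
  have hz : (-(ℓ:ℤ))^(K+1) * c0 m (phi m ρ) ≡ 0 [ZMOD (ℓ:ℤ)^N] := by
    rw [Int.modEq_zero_iff_dvd, hNK]
    exact Dvd.dvd.mul_right ⟨(-1:ℤ)^(K+1), by rw [neg_pow]; ring⟩ _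
  have h0 : (-(ℓ:ℤ))^K + (-(ℓ:ℤ))^(K+1) * c0 m (phi m ρ)
      ≡ (-(ℓ:ℤ))^K + 0 [ZMOD (ℓ:ℤ)^N] := Int.ModEq.add_left _ hz
  simpa using h0
end

section
/- Let ℓ be an odd prime, N ≥ 1, k ≥ 1 an integer, and 0 ≤ v < ℓ^N. Then ∑_{k' ≥ 0, k' ≡ v (mod ℓ^N)} (-1)^{k'} C(ℓ^N + 2k - 2, k') ≡ 0 (mod ℓ). -/
open scoped BigOperators

/-- Vandermonde mod ℓ: binomials of `ℓ^N + m'` collapse to two terms. -/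
lemma aux_vandermonde (ℓ N m' j : ℕ) (hℓ : ℓ.Prime) :
    (((ℓ ^ N + m').choose j : ℕ) : ZMod ℓ)
      = (m'.choose j : ZMod ℓ)
        + (if ℓ ^ N ≤ j then ((m'.choose (j - ℓ ^ N) : ℕ) : ZMod ℓ) else 0) := by
  set q := ℓ ^ N with hq
  have hq1 : 1 ≤ q := Nat.one_le_pow _ _ hℓ.pos
  rw [Nat.add_choose_eq]
  push_cast
  rw [Finset.Nat.sum_antidiagonal_eq_sum_range_succ_mk
      (fun ij => ((q.choose ij.1 : ℕ) : ZMod ℓ) * ((m'.choose ij.2 : ℕ) : ZMod ℓ))]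
  have hz : ∀ i ∈ Finset.range (j + 1),
      ((q.choose i : ℕ) : ZMod ℓ) * ((m'.choose (j - i) : ℕ) : ZMod ℓ) ≠ 0 →
      i = 0 ∨ i = q := by
    intro i _ hne
    by_contra hc
    push_neg at hc
    have : ℓ ∣ q.choose i := hℓ.dvd_choose_pow hc.1 hc.2
    have : ((q.choose i : ℕ) : ZMod ℓ) = 0 := (ZMod.natCast_eq_zero_iff _ _).mpr this
    exact hne (by rw [this, zero_mul])
  rw [← Finset.sum_filter_of_ne hz]
  by_cases hqj : q ≤ j
  · have hset : (Finset.range (j + 1)).filter (fun i => i = 0 ∨ i = q) = {0, q} := by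
      ext i
      simp only [Finset.mem_filter, Finset.mem_range, Finset.mem_insert, Finset.mem_singleton]
      constructor
      · rintro ⟨_, h⟩; exact h
      · rintro (rfl | rfl)
        · exact ⟨by omega, Or.inl rfl⟩
        · exact ⟨by omega, Or.inr rfl⟩
    rw [hset, Finset.sum_pair (by omega : (0 : ℕ) ≠ q)]
    simp [Nat.choose_zero_right, Nat.choose_self, hqj]
  · have hset : (Finset.range (j + 1)).filter (fun i => i = 0 ∨ i = q) = {0} := by
      ext i
      simp only [Finset.mem_filter, Finset.mem_range, Finset.mem_singleton]
      constructor
      · rintro ⟨hi, (rfl | rfl)⟩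
        · rfl
        · omega
      · rintro rfl; exact ⟨by omega, Or.inl rfl⟩
    rw [hset, Finset.sum_singleton]
    simp [hqj]

theorem stmt_12 (ℓ N k : ℕ) (hℓ : ℓ.Prime) (hodd : Odd ℓ) (hN : 1 ≤ N) (hk : 1 ≤ k)
    (v : ℕ) (hv : v < ℓ ^ N) :
    (∑ k' ∈ (Finset.range (ℓ ^ N + 2 * k - 1)).filter (fun k' => k' % ℓ ^ N = v),
        (-1 : ℤ) ^ k' * ((ℓ ^ N + 2 * k - 2).choose k'))
      ≡ 0 [ZMOD (ℓ : ℤ)] := by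
  set q := ℓ ^ N with hq
  have hq3 : 3 ≤ q := by
    have h3 : 3 ≤ ℓ := by
      have := hℓ.two_le
      rcases hodd with ⟨m, hm⟩
      omega
    calc 3 ≤ ℓ := h3
    _ = ℓ ^ 1 := (pow_one ℓ).symm
    _ ≤ ℓ ^ N := Nat.pow_le_pow_right hℓ.pos hN
  set m' := 2 * k - 2 with hm'
  have hoddq : Odd q := hodd.pow
  -- reduce to a statement in ZMod ℓ
  rw [Int.modEq_zero_iff_dvd, ← ZMod.intCast_zmod_eq_zero_iff_dvd]
  push_cast
  -- Step A: extend range to v + 2*k*q (extra terms vanish since choose = 0)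
  have hR : q + 2 * k - 1 ≤ v + 2 * k * q := by
    obtain ⟨t, ht⟩ : ∃ t, 2 * k = t + 1 := ⟨2 * k - 1, by omega⟩
    have h1 : t ≤ t * q := Nat.le_mul_of_pos_right t (by omega)
    have h2 : 2 * k * q = t * q + q := by rw [ht]; ring
    omega
  rw [show (∑ k' ∈ (Finset.range (q + 2 * k - 1)).filter (fun k' => k' % q = v),
        (-1 : ZMod ℓ) ^ k' * ((q + 2 * k - 2).choose k' : ℕ))
      = ∑ k' ∈ (Finset.range (v + 2 * k * q)).filter (fun k' => k' % q = v),
        (-1 : ZMod ℓ) ^ k' * ((q + 2 * k - 2).choose k' : ℕ) from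
    Finset.sum_subset
      (Finset.filter_subset_filter _ (Finset.range_subset_range.mpr hR))
      (by
        intro j hj hjn
        simp only [Finset.mem_filter, Finset.mem_range] at hj hjn
        have hjm : q + 2 * k - 2 < j := by omega
        rw [Nat.choose_eq_zero_of_lt hjm]
        simp)]
  -- Step B: reindex the arithmetic progression
  have hqpos : 0 < q := by omega
  have hset : (Finset.range (v + 2 * k * q)).filter (fun j => j % q = v)
      = (Finset.range (2 * k)).image (fun t => v + t * q) := by
    ext j
    simp only [Finset.mem_filter, Finset.mem_range, Finset.mem_image]
    constructor
    · rintro ⟨hj, hmod⟩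
      refine ⟨j / q, ?_, ?_⟩
      · have hrep : j = v + j / q * q := by
          conv_lhs => rw [← Nat.mod_add_div j q, hmod]
          ring
        have : j / q * q < 2 * k * q := by omega
        exact lt_of_mul_lt_mul_right this (Nat.zero_le q)
      · conv_rhs => rw [← Nat.mod_add_div j q, hmod]
        ring
    · rintro ⟨t, ht, rfl⟩
      refine ⟨?_, ?_⟩
      · have : t * q < 2 * k * q := (Nat.mul_lt_mul_right hqpos).mpr ht
        omega
      · rw [Nat.add_mul_mod_self_right, Nat.mod_eq_of_lt hv]
  rw [hset, Finset.sum_image (by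
    intro x _ y _ hxy
    have : x * q = y * q := by simp only at hxy; omega
    exact Nat.eq_of_mul_eq_mul_right hqpos this)]
  -- Step C: apply Vandermonde mod ℓ termwise and telescope
  have harg : q + 2 * k - 2 = q + m' := by omega
  rw [harg]
  set g : ℕ → ZMod ℓ := fun t => (-1) ^ (v + t * q) * ((m'.choose (v + t * q) : ℕ) : ZMod ℓ)
    with hg
  have hterm : ∀ t ∈ Finset.range (2 * k),
      (-1 : ZMod ℓ) ^ (v + t * q) * (((q + m').choose (v + t * q) : ℕ) : ZMod ℓ)
        = g t + (if t = 0 then 0 else -g (t - 1)) := by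
    intro t _
    rw [show ((q : ℕ) + m') = ℓ ^ N + m' from by rw [hq], aux_vandermonde ℓ N m' _ hℓ, ← hq]
    rcases Nat.eq_zero_or_pos t with rfl | htpos
    · simp only [hg, zero_mul, add_zero, if_neg (show ¬ q ≤ v by omega), if_pos rfl, if_true]
    · obtain ⟨s, rfl⟩ : ∃ s, t = s + 1 := ⟨t - 1, by omega⟩
      have hle : q ≤ v + (s + 1) * q := by
        have : (s + 1) * q = s * q + q := by ring
        omega
      have hsub : v + (s + 1) * q - q = v + s * q := by
        have : (s + 1) * q = s * q + q := by ring
        omega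
      have hpow : (-1 : ZMod ℓ) ^ (v + (s + 1) * q) = -(-1 : ZMod ℓ) ^ (v + s * q) := by
        have : v + (s + 1) * q = (v + s * q) + q := by ring
        rw [this, pow_add, hoddq.neg_one_pow]
        ring
      simp only [hle, if_pos, hsub, hpow, hg]
      simp only [Nat.add_sub_cancel, if_neg (Nat.succ_ne_zero s)]
      ring
  rw [Finset.sum_congr rfl hterm, Finset.sum_add_distrib]
  have h2k : 2 * k = (2 * k - 1) + 1 := by omega
  rw [h2k, Finset.sum_range_succ, Finset.sum_range_succ']
  have hglast : g (2 * k - 1) = 0 := by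
    have h1 : 2 * k - 1 ≤ (2 * k - 1) * q := Nat.le_mul_of_pos_right _ hqpos
    have : m' < v + (2 * k - 1) * q := by omega
    simp [hg, Nat.choose_eq_zero_of_lt this]
  simp only [hglast, if_neg (Nat.succ_ne_zero _), Nat.add_sub_cancel, if_pos rfl]
  simp [Finset.sum_neg_distrib]
end

section
/- Let ℓ be an odd prime, N ≥ 1, ζ a primitive ℓ^N-th root of unity, π = ζ - ζ^{-1} and π' = 1 - ζ in the local field Q_ℓ(ζ). Let f = ℓ^{N-1}(ℓ+1). Then 1 + π^{f-1} ≡ (1 + π'^{f-1})^{-2} modulo π'^f, and consequently for any Δ whose associated Hilbert symbol character (·, Δ)_{ℓ^N} has conductor exponent at most f, one has (1 + π^{f-1}, Δ)_{ℓ^N} = (1 + π'^{f-1}, Δ)_{ℓ^N}^{-2}. -/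
theorem stmt_18 (ℓ N : ℕ) [Fact ℓ.Prime] (hodd : Odd ℓ) (hN : 1 ≤ N)
    {K : Type*} [Field K] [Algebra ℚ_[ℓ] K] [FiniteDimensional ℚ_[ℓ] K]
    [Algebra ℤ_[ℓ] K] [IsScalarTower ℤ_[ℓ] ℚ_[ℓ] K]
    (ζ : K) (hζ : IsPrimitiveRoot ζ (ℓ ^ N)) (hKgen : Algebra.adjoin ℚ_[ℓ] {ζ} = ⊤)
    (f : ℕ) (hfdef : f = ℓ ^ (N - 1) * (ℓ + 1))
    (π π' : integralClosure ℤ_[ℓ] K)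
    (hπ : (π : K) = ζ - ζ⁻¹) (hπ' : (π' : K) = 1 - ζ) :
    (π' ^ f ∣ (1 + π ^ (f - 1)) * (1 + π' ^ (f - 1)) ^ 2 - 1)
    ∧ ∀ χ : Kˣ →* ℂˣ,
        (∀ x : Kˣ,
          (∃ z : integralClosure ℤ_[ℓ] K, (x : K) = 1 + (1 - ζ) ^ f * (z : K)) → χ x = 1) →
        ∀ u v : Kˣ, (u : K) = 1 + (ζ - ζ⁻¹) ^ (f - 1) → (v : K) = 1 + (1 - ζ) ^ (f - 1) →
          χ u = (χ v) ^ (-2 : ℤ) := by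
  have hℓp : ℓ.Prime := Fact.out
  have hℓ3 : 3 ≤ ℓ := by
    rcases Nat.lt_or_ge ℓ 3 with h | h
    · interval_cases ℓ
      · exact absurd hℓp (by norm_num)
      · exact absurd hℓp (by norm_num)
      · exact absurd hodd (by norm_num)
    · exact h
  have hpow1 : 1 ≤ ℓ ^ (N - 1) := Nat.one_le_pow _ _ (by omega)
  have hf4 : 4 ≤ f := by
    calc 4 = 1 * 4 := by norm_num
    _ ≤ ℓ ^ (N - 1) * (ℓ + 1) := Nat.mul_le_mul hpow1 (by omega)
    _ = f := hfdef.symm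
  have hfeven : Even f := by
    rw [hfdef]
    exact (hodd.add_one).mul_left _
  have hfodd : Odd (f - 1) := Nat.Even.sub_odd (by omega) hfeven (by norm_num)
  have hn0 : 0 < ℓ ^ N := Nat.pow_pos (by omega)
  have hζn : ζ ^ (ℓ ^ N) = 1 := hζ.pow_eq_one
  have hζ0 : ζ ≠ 0 := by
    intro h
    rw [h, zero_pow hn0.ne'] at hζn
    exact zero_ne_one hζn
  -- elements of the integral closure
  set z : integralClosure ℤ_[ℓ] K := 1 - π' with hzdef
  have hz : (z : K) = ζ := by push_cast [hzdef, hπ']; ring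
  set y : integralClosure ℤ_[ℓ] K := z ^ (ℓ ^ N - 1) with hydef
  have hy : (y : K) = ζ⁻¹ := by
    have h1 : ζ ^ (ℓ ^ N - 1) * ζ = 1 := by
      rw [← pow_succ, Nat.sub_add_cancel hn0, hζn]
    push_cast [hydef, hz]
    exact eq_inv_of_mul_eq_one_left h1
  set a : integralClosure ℤ_[ℓ] K := 2 + y * π' with hadef
  have h2R : ((2 : integralClosure ℤ_[ℓ] K) : K) = 2 := by norm_cast
  have key1 : π = -(a * π') := by
    apply Subtype.ext
    push_cast [hπ, hπ', hadef, hy, h2R]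
    field_simp
    ring
  have key2 : π ^ (f - 1) = -(a ^ (f - 1)) * π' ^ (f - 1) := by
    rw [key1, hfodd.neg_pow, mul_pow]
    ring
  -- π' divides ℓ in R
  have hπ'ℓ : π' ∣ (ℓ : integralClosure ℤ_[ℓ] K) := by
    have hz' : π' = 1 - z := by rw [hzdef]; ring
    set φ : integralClosure ℤ_[ℓ] K →+* K := (integralClosure ℤ_[ℓ] K).val.toRingHom with hφdef
    have hφz : φ z = ζ := hz
    set Q : Polynomial (integralClosure ℤ_[ℓ] K) := (Polynomial.cyclotomic (ℓ ^ N) ℤ).map (Int.castRingHom (integralClosure ℤ_[ℓ] K)) with hQ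
    have hQz : Q.eval z = 0 := by
      have hmap : Q.map φ = Polynomial.cyclotomic (ℓ ^ N) K := by
        rw [hQ, Polynomial.map_map]
        exact Polynomial.map_cyclotomic _ _
      have hroot : (Polynomial.cyclotomic (ℓ ^ N) K).eval ζ = 0 :=
        hζ.isRoot_cyclotomic hn0
      have : φ (Q.eval z) = 0 := by
        rw [← Polynomial.eval₂_at_apply, hφz, ← Polynomial.eval_map, hmap, hroot]
      exact Subtype.ext this
    have hQ1 : Q.eval 1 = (ℓ : integralClosure ℤ_[ℓ] K) := by
      have : Q.eval 1 = (Int.castRingHom (integralClosure ℤ_[ℓ] K)) ((Polynomial.cyclotomic (ℓ ^ N) ℤ).eval 1) := by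
        rw [hQ, Polynomial.eval_one_map]
      rw [this, show ℓ ^ N = ℓ ^ ((N - 1) + 1) by rw [Nat.sub_add_cancel hN],
        Polynomial.eval_one_cyclotomic_prime_pow]
      simp
    have := Polynomial.sub_dvd_eval_sub 1 z Q
    rw [hQ1, hQz, sub_zero, ← hz'] at this
    exact this
  -- ℓ divides 2^(f-1) - 2 in ℤ
  have hℤ : (ℓ : ℤ) ∣ 2 ^ (f - 1) - 2 := by
    have hmod : f ≡ 2 [MOD ℓ - 1] := by
      have h1 : ℓ ≡ 1 [MOD ℓ - 1] :=
        ((Nat.modEq_iff_dvd' (by omega)).mpr dvd_rfl).symm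
      calc f = ℓ ^ (N - 1) * (ℓ + 1) := hfdef
      _ ≡ 1 ^ (N - 1) * (1 + 1) [MOD ℓ - 1] := (h1.pow _).mul (h1.add_right 1)
      _ = 2 := by norm_num
    have hdvd : (ℓ - 1) ∣ (f - 2) := (Nat.modEq_iff_dvd' (by omega)).mp hmod.symm
    obtain ⟨k, hk⟩ := hdvd
    have dvd1 : ((2 : ℤ) ^ (ℓ - 1) - 1) ∣ 2 ^ (f - 2) - 1 := by
      rw [hk, pow_mul]
      simpa using sub_dvd_pow_sub_pow ((2 : ℤ) ^ (ℓ - 1)) 1 k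
    have dvd2 : (ℓ : ℤ) ∣ (2 : ℤ) ^ (ℓ - 1) - 1 := by
      rw [← ZMod.intCast_zmod_eq_zero_iff_dvd]
      push_cast
      rw [sub_eq_zero]
      refine ZMod.pow_card_sub_one_eq_one ?_
      intro h2
      have : ((2 : ℕ) : ZMod ℓ) = 0 := by push_cast; exact h2
      rw [ZMod.natCast_eq_zero_iff] at this
      exact absurd (Nat.le_of_dvd (by norm_num) this) (by omega)
    have hsplit : (2 : ℤ) ^ (f - 1) - 2 = 2 * ((2 : ℤ) ^ (f - 2) - 1) := by
      rw [show f - 1 = (f - 2) + 1 by omega, pow_succ]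
      ring
    rw [hsplit]
    exact (dvd2.trans dvd1).mul_left 2
  have hRdvd : (ℓ : integralClosure ℤ_[ℓ] K) ∣ 2 ^ (f - 1) - 2 := by
    have h := map_dvd (Int.castRingHom (integralClosure ℤ_[ℓ] K)) hℤ
    rw [eq_intCast, eq_intCast] at h
    push_cast at h
    exact h
  -- π' divides a^(f-1) - 2
  have hkey : π' ∣ a ^ (f - 1) - 2 := by
    have h1 : π' ∣ a ^ (f - 1) - 2 ^ (f - 1) := by
      refine dvd_trans ?_ (sub_dvd_pow_sub_pow a 2 (f - 1))
      rw [hadef]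
      exact ⟨y, by ring⟩
    have h2 : π' ∣ (2 : integralClosure ℤ_[ℓ] K) ^ (f - 1) - 2 := hπ'ℓ.trans hRdvd
    have : a ^ (f - 1) - 2 = (a ^ (f - 1) - 2 ^ (f - 1)) + (2 ^ (f - 1) - 2) := by ring
    rw [this]
    exact dvd_add h1 h2
  -- Part 1
  have part1 : π' ^ f ∣ (1 + π ^ (f - 1)) * (1 + π' ^ (f - 1)) ^ 2 - 1 := by
    have e1 : π' ^ f ∣ (2 - a ^ (f - 1)) * π' ^ (f - 1) := by
      obtain ⟨c, hc⟩ := hkey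
      refine ⟨-c, ?_⟩
      have h2 : (2 : integralClosure ℤ_[ℓ] K) - a ^ (f - 1) = -(π' * c) := by rw [← hc]; ring
      have hfsplit : π' ^ f = π' ^ (f - 1) * π' := by
        rw [← pow_succ, Nat.sub_add_cancel (by omega : 1 ≤ f)]
      rw [h2, hfsplit]
      ring
    have e2 : π' ^ f ∣ π' ^ (f - 1) * π' ^ (f - 1) := by
      rw [← pow_add]
      exact pow_dvd_pow _ (by omega)
    have expand : (1 + π ^ (f - 1)) * (1 + π' ^ (f - 1)) ^ 2 - 1 =
        (2 - a ^ (f - 1)) * π' ^ (f - 1) +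
        (π' ^ (f - 1) * π' ^ (f - 1)) * ((1 - 2 * a ^ (f - 1)) - a ^ (f - 1) * π' ^ (f - 1)) := by
      rw [key2]; ring
    rw [expand]
    exact dvd_add e1 (e2.mul_right _)
  refine ⟨part1, ?_⟩
  -- Part 2
  intro χ hχ u v hu hv
  obtain ⟨c, hc⟩ := part1
  have hcK : (1 + (ζ - ζ⁻¹) ^ (f - 1)) * (1 + (1 - ζ) ^ (f - 1)) ^ 2 - 1
      = (1 - ζ) ^ f * (c : K) := by
    have h := congrArg (fun t : integralClosure ℤ_[ℓ] K => (t : K)) hc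
    push_cast [hπ, hπ'] at h
    linear_combination h
  have huv : χ (u * v ^ 2) = 1 := by
    refine hχ _ ⟨c, ?_⟩
    push_cast [hu, hv]
    linear_combination hcK
  rw [map_mul, map_pow] at huv
  have hneg : (χ v) ^ (-2 : ℤ) = ((χ v) ^ 2)⁻¹ := by
    rw [zpow_neg, show (2 : ℤ) = ((2 : ℕ) : ℤ) by norm_num, zpow_natCast]
  rw [hneg]
  exact eq_inv_of_mul_eq_one_left huv
end
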